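/- arXiv:1108.2148 — 6 statements merged into one kernel-verified Lean document; each statement's English description precedes it below -/
import Mathlib

section
/- Let G = SL_{n+1}(k) and let R = SL_n(k) embedded in G acting on the first n basis vectors, acting on G by X ↦ Xr⁻¹. Then the algebra of R-invariant regular functions on G is generated by the n+1 minors Mᵢ (obtained by deleting row i and the last column) together with the n+1 entries yᵢ of the last column. -/
variable (k : Type) [Field k] [CharZero k] [IsAlgClosed k] (n : ℕ)

/-- The block-diagonal embedding `SL_n ↪ SL_{n+1}` acting on the first `n` basis
vectors. -/
def embedSL (r : Matrix.SpecialLinearGroup (Fin n) k) :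
    Matrix.SpecialLinearGroup (Fin (n + 1)) k :=
  ⟨Matrix.reindex finSumFinEquiv finSumFinEquiv
      (Matrix.fromBlocks r.1 0 0 (1 : Matrix (Fin 1) (Fin 1) k)), by
    simp [Matrix.det_fromBlocks_zero₂₁, r.2]⟩

/-- Regular functions on `SL_{n+1}`: the subalgebra of functions generated by the
matrix coordinates. -/
def regularSL : Subalgebra k (Matrix.SpecialLinearGroup (Fin (n + 1)) k → k) :=
  Algebra.adjoin k (Set.range fun p : Fin (n + 1) × Fin (n + 1) =>
    fun X : Matrix.SpecialLinearGroup (Fin (n + 1)) k => X.1 p.1 p.2)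

/-- Functions invariant under the right action `X ↦ Xr⁻¹` of `SL_n` (equivalently,
under `X ↦ Xr`). -/
def invSLn : Subalgebra k (Matrix.SpecialLinearGroup (Fin (n + 1)) k → k) where
  carrier := {φ | ∀ (r : Matrix.SpecialLinearGroup (Fin n) k) X,
    φ (X * (embedSL k n r)⁻¹) = φ X}
  mul_mem' := by intro a b ha hb r X; simp [Pi.mul_apply, ha r X, hb r X]
  add_mem' := by intro a b ha hb r X; simp [Pi.add_apply, ha r X, hb r X]
  algebraMap_mem' := by intro c r X; rfl

/-- The minor `Mᵢ` : the determinant of the submatrix obtained by deleting the `i`-th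
row and the last column. -/
def minorFn (i : Fin (n + 1)) : Matrix.SpecialLinearGroup (Fin (n + 1)) k → k :=
  fun X => (X.1.submatrix i.succAbove Fin.castSucc).det

/-- The entry `yᵢ` of the last column. -/
def lastColFn (i : Fin (n + 1)) : Matrix.SpecialLinearGroup (Fin (n + 1)) k → k :=
  fun X => X.1 i (Fin.last n)

/-!
On the open set `Mᵢ ≠ 0` the block `B` of `X` formed by the rows other than `i` and the first `n`
columns is invertible, and `r = B⁻¹ · diag(Mᵢ, 1, …, 1)` lies in `SL_n`. By Cramer's rule every
entry of `X r` is a quotient of an element of `A = k[M, y]` by `Mᵢ`, so for an invariant regular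
`φ` we get `Mᵢ ^ N * φ ∈ A`. Laplace expansion along the last column gives `∑ ± yᵢ Mᵢ = det = 1`,
so the `Mᵢ` generate the unit ideal of `A`, and therefore `φ ∈ A`.
-/

namespace Matrix

theorem updateRow_submatrix_id {l m n α : Type*} [DecidableEq l] (M : Matrix m n α)
    (f : l → m) (j : l) (p : m) :
    (M.submatrix f id).updateRow j (M p) = M.submatrix (Function.update f j p) id := by
  ext a b
  by_cases h : a = j
  · subst h; simp
  · simp [h]

theorem exists_det_submatrix_eq_zsmul {R : Type*} [CommRing R] {n : ℕ}
    (g : Fin n → Fin (n + 1)) :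
    ∃ (i : Fin (n + 1)) (c : ℤ), ∀ M : Matrix (Fin (n + 1)) (Fin n) R,
      (M.submatrix g id).det = c • (M.submatrix i.succAbove id).det := by
  by_cases hg : Function.Injective g
  · obtain ⟨i, hi⟩ : ∃ i, i ∉ Set.range g := by
      by_contra! h
      simpa using Fintype.card_le_of_surjective g (Set.range_eq_univ.mp (Set.eq_univ_of_forall h))
    choose e he using fun a => Fin.exists_succAbove_eq fun h : g a = i => hi ⟨a, h⟩
    have e_bij : Function.Bijective e := Finite.injective_iff_bijective.mp fun a b hab =>
      hg (by rw [← he a, ← he b, hab])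
    refine ⟨i, Equiv.Perm.sign (Equiv.ofBijective e e_bij), fun M => ?_⟩
    have hM : M.submatrix g id =
        (M.submatrix i.succAbove id).submatrix (Equiv.ofBijective e e_bij) id := by
      ext a b
      simp [he]
    rw [hM, det_permute, zsmul_eq_mul]
  · obtain ⟨a, b, hab, hne⟩ := Function.not_injective_iff.mp hg
    exact ⟨0, 0, fun M => by
      rw [zero_smul]; exact det_zero_of_row_eq hne (by ext; simp [hab])⟩

end Matrix

theorem exists_pow_mul_comp_eq_of_mem_adjoin {R S : Type*} [CommSemiring R]
    {A : Subalgebra R (S → R)} {s : Set (S → R)} {m : S → R} (hm : m ∈ A) {U : Set S}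
    {T : S → S} (hs : ∀ x ∈ s, ∃ F ∈ A, ∀ X ∈ U, m X * x (T X) = F X) {ψ : S → R}
    (hψ : ψ ∈ Algebra.adjoin R s) : ∃ N : ℕ, ∃ F ∈ A, ∀ X ∈ U, m X ^ N * ψ (T X) = F X := by
  induction hψ using Algebra.adjoin_induction with
  | mem x hx =>
    obtain ⟨F, hF, h⟩ := hs x hx
    exact ⟨1, F, hF, by simpa using h⟩
  | algebraMap c => exact ⟨0, algebraMap R _ c, A.algebraMap_mem c, by simp⟩
  | add x y _ _ hx hy =>
    obtain ⟨N₁, F₁, hF₁, h₁⟩ := hx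
    obtain ⟨N₂, F₂, hF₂, h₂⟩ := hy
    refine ⟨N₁ + N₂, m ^ N₂ * F₁ + m ^ N₁ * F₂,
      add_mem (mul_mem (pow_mem hm _) hF₁) (mul_mem (pow_mem hm _) hF₂), fun X hX => ?_⟩
    simp only [Pi.add_apply, Pi.mul_apply, Pi.pow_apply, ← h₁ X hX, ← h₂ X hX]
    ring
  | mul x y _ _ hx hy =>
    obtain ⟨N₁, F₁, hF₁, h₁⟩ := hx
    obtain ⟨N₂, F₂, hF₂, h₂⟩ := hy
    refine ⟨N₁ + N₂, F₁ * F₂, mul_mem hF₁ hF₂, fun X hX => ?_⟩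
    simp only [Pi.mul_apply, ← h₁ X hX, ← h₂ X hX]
    ring

open scoped MatrixGroups

section

omit [CharZero k] [IsAlgClosed k]

variable {k n}

theorem embedSL_mul (r s : SL(n, k)) : embedSL k n (r * s) = embedSL k n r * embedSL k n s := by
  apply Subtype.ext
  rw [Matrix.SpecialLinearGroup.coe_mul]
  simp only [embedSL, Matrix.SpecialLinearGroup.coe_mul, Matrix.reindex_apply,
    Matrix.submatrix_mul_equiv _ _ _ finSumFinEquiv.symm]
  rw [Matrix.fromBlocks_multiply]
  simp

variable (k n) in
def embedSLHom : SL(n, k) →* SL(n + 1, k) := MonoidHom.mk' (embedSL k n) embedSL_mul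

theorem mem_invSLn_iff {φ : SL(n + 1, k) → k} :
    φ ∈ invSLn k n ↔ ∀ r X, φ (X * embedSL k n r) = φ X := by
  have h (r : SL(n, k)) : (embedSL k n r)⁻¹ = embedSL k n r⁻¹ := (map_inv (embedSLHom k n) r).symm
  refine ⟨fun hφ r X => ?_, fun hφ r X => by rw [h]; exact hφ _ X⟩
  simpa [h] using hφ r⁻¹ X

theorem submatrix_mul_embedSL {m : Type*} (M : Matrix (Fin (n + 1)) (Fin (n + 1)) k)
    (f : m → Fin (n + 1)) (r : SL(n, k)) :
    (M * (embedSL k n r).1).submatrix f Fin.castSucc = M.submatrix f Fin.castSucc * r.1 := by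
  ext a b
  simp [Matrix.mul_apply, Fin.sum_univ_castSucc, embedSL, Matrix.reindex_apply]

theorem mul_embedSL_apply_last (M : Matrix (Fin (n + 1)) (Fin (n + 1)) k) (r : SL(n, k))
    (p : Fin (n + 1)) : (M * (embedSL k n r).1) p (Fin.last n) = M p (Fin.last n) := by
  simp [Matrix.mul_apply, Fin.sum_univ_castSucc, embedSL, Matrix.reindex_apply]

variable (k n) in
def adjoinMinorLastCol : Subalgebra k (SL(n + 1, k) → k) :=
  Algebra.adjoin k (Set.range (minorFn k n) ∪ Set.range (lastColFn k n))

theorem minorFn_mem_adjoinMinorLastCol (i : Fin (n + 1)) :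
    minorFn k n i ∈ adjoinMinorLastCol k n :=
  Algebra.subset_adjoin (Or.inl ⟨i, rfl⟩)

theorem lastColFn_mem_adjoinMinorLastCol (i : Fin (n + 1)) :
    lastColFn k n i ∈ adjoinMinorLastCol k n :=
  Algebra.subset_adjoin (Or.inr ⟨i, rfl⟩)

variable (k n) in
def rowMinorFn (g : Fin n → Fin (n + 1)) : SL(n + 1, k) → k :=
  fun X => (X.1.submatrix g Fin.castSucc).det

theorem rowMinorFn_mem_adjoinMinorLastCol (g : Fin n → Fin (n + 1)) :
    rowMinorFn k n g ∈ adjoinMinorLastCol k n := by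
  obtain ⟨i, c, hc⟩ := Matrix.exists_det_submatrix_eq_zsmul (R := k) g
  have : rowMinorFn k n g = c • minorFn k n i := funext fun X => hc (X.1.submatrix id Fin.castSucc)
  rw [this]
  exact zsmul_mem (minorFn_mem_adjoinMinorLastCol i) c

theorem det_submatrix_mem_regularSL {m : ℕ} (f g : Fin m → Fin (n + 1)) :
    (fun X : SL(n + 1, k) => (X.1.submatrix f g).det) ∈ regularSL k n := by
  have : (fun X : SL(n + 1, k) => (X.1.submatrix f g).det) =
      ∑ σ : Equiv.Perm (Fin m),
        (Equiv.Perm.sign σ : ℤ) • ∏ a, fun X : SL(n + 1, k) => X.1 (f (σ a)) (g a) := by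
    ext X
    simp [Matrix.det_apply, Units.smul_def]
  rw [this]
  refine sum_mem fun σ _ => zsmul_mem (prod_mem fun a _ => ?_) _
  exact Algebra.subset_adjoin ⟨(f (σ a), g a), rfl⟩

theorem minorFn_mul_embedSL (i : Fin (n + 1)) (X : SL(n + 1, k)) (r : SL(n, k)) :
    minorFn k n i (X * embedSL k n r) = minorFn k n i X := by
  rw [minorFn, Matrix.SpecialLinearGroup.coe_mul, submatrix_mul_embedSL, Matrix.det_mul, r.2,
    mul_one, minorFn]

theorem lastColFn_mul_embedSL (i : Fin (n + 1)) (X : SL(n + 1, k)) (r : SL(n, k)) :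
    lastColFn k n i (X * embedSL k n r) = lastColFn k n i X := by
  rw [lastColFn, Matrix.SpecialLinearGroup.coe_mul, mul_embedSL_apply_last, lastColFn]

theorem adjoinMinorLastCol_le_regularSL_inf_invSLn :
    adjoinMinorLastCol k n ≤ regularSL k n ⊓ invSLn k n := by
  refine Algebra.adjoin_le ?_
  rintro f (⟨i, rfl⟩ | ⟨i, rfl⟩)
  · exact ⟨det_submatrix_mem_regularSL _ _, mem_invSLn_iff.mpr fun r X => minorFn_mul_embedSL i X r⟩
  · exact ⟨Algebra.subset_adjoin ⟨(i, Fin.last n), rfl⟩,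
      mem_invSLn_iff.mpr fun r X => lastColFn_mul_embedSL i X r⟩

theorem sum_lastColFn_mul_minorFn :
    ∑ i : Fin (n + 1), ((-1 : k) ^ (i + n : ℕ) • lastColFn k n i) * minorFn k n i = 1 := by
  funext X
  refine Eq.trans ?_ X.2
  rw [Finset.sum_apply, Matrix.det_succ_column X.1 (Fin.last n)]
  simp [lastColFn, minorFn, mul_assoc]

theorem exists_minorFn_mul_mul_embedSL_apply_castSucc {i : Fin (n + 1)} {X : SL(n + 1, k)}
    (hX : minorFn k n i X ≠ 0) :
    ∃ r : SL(n, k), ∀ p (q : Fin n), minorFn k n i X * (X * embedSL k n r).1 p q.castSucc =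
      rowMinorFn k n (Function.update i.succAbove q p) X *
        if (q : ℕ) = 0 then minorFn k n i X else 1 := by
  set X' := X.1.submatrix id Fin.castSucc
  set B := X'.submatrix i.succAbove id
  have hB : B.det = minorFn k n i X := rfl
  set d : Fin n → k := fun q => if (q : ℕ) = 0 then B.det else 1
  have hd : ∏ q, d q = B.det := by
    cases n with
    | zero => exact Matrix.det_fin_zero.symm
    | succ n => simp [d]
  have hdet : (B⁻¹ * Matrix.diagonal d).det = 1 := by
    rw [Matrix.det_mul, Matrix.det_nonsing_inv, Matrix.det_diagonal, hd, Ring.inverse_eq_inv',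
      inv_mul_cancel₀ (hB ▸ hX)]
  refine ⟨⟨B⁻¹ * Matrix.diagonal d, hdet⟩, fun p q => ?_⟩
  have hentry := congrFun₂ (submatrix_mul_embedSL X.1 id ⟨_, hdet⟩) p q
  simp only [Matrix.submatrix_apply, id] at hentry
  have hcramer : B.det * (X' * B⁻¹) p q = rowMinorFn k n (Function.update i.succAbove q p) X := by
    rw [Matrix.mul_apply_eq_vecMul, ← smul_eq_mul,
      ← Pi.smul_apply B.det (Matrix.vecMul (X' p) B⁻¹) q,
      Matrix.det_smul_inv_vecMul_eq_cramer_transpose _ _ (isUnit_iff_ne_zero.mpr (hB ▸ hX)),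
      Matrix.cramer_transpose_apply, Matrix.updateRow_submatrix_id]
    rfl
  rw [Matrix.SpecialLinearGroup.coe_mul, hentry, ← Matrix.mul_assoc, Matrix.mul_diagonal, ← hB,
    ← mul_assoc, hcramer]

theorem exists_forall_minorFn_pow_mul_comp_eq (i : Fin (n + 1)) :
    ∃ r : SL(n + 1, k) → SL(n, k), ∀ ψ ∈ regularSL k n, ∃ N : ℕ, ∃ F ∈ adjoinMinorLastCol k n,
      ∀ X ∈ {X | minorFn k n i X ≠ 0}, minorFn k n i X ^ N * ψ (X * embedSL k n (r X)) = F X := by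
  choose! r hr using fun X (hX : minorFn k n i X ≠ 0) =>
    exists_minorFn_mul_mul_embedSL_apply_castSucc hX
  refine ⟨r, fun ψ hψ => exists_pow_mul_comp_eq_of_mem_adjoin (minorFn_mem_adjoinMinorLastCol i)
    ?_ hψ⟩
  rintro _ ⟨⟨p, q⟩, rfl⟩
  induction q using Fin.lastCases with
  | last =>
    exact ⟨minorFn k n i * lastColFn k n p, mul_mem (minorFn_mem_adjoinMinorLastCol i)
      (lastColFn_mem_adjoinMinorLastCol p), fun X _ => by simp [lastColFn, mul_embedSL_apply_last]⟩
  | cast q =>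
    refine ⟨rowMinorFn k n (Function.update i.succAbove q p) *
      if (q : ℕ) = 0 then minorFn k n i else 1, mul_mem (rowMinorFn_mem_adjoinMinorLastCol _) ?_,
      fun X hX => by simp only [Pi.mul_apply]; rw [hr X hX p q]; split_ifs <;> rfl⟩
    split_ifs
    exacts [minorFn_mem_adjoinMinorLastCol i, one_mem _]

theorem exists_minorFn_pow_mul_mem {φ : SL(n + 1, k) → k} (hφ : φ ∈ regularSL k n ⊓ invSLn k n)
    (i : Fin (n + 1)) : ∃ N : ℕ, minorFn k n i ^ N * φ ∈ adjoinMinorLastCol k n := by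
  obtain ⟨hreg, hinv⟩ := hφ
  obtain ⟨r, hr⟩ := exists_forall_minorFn_pow_mul_comp_eq (k := k) i
  obtain ⟨N, F, hF, hNF⟩ := hr φ hreg
  have : minorFn k n i ^ (N + 1) * φ = minorFn k n i * F := funext fun X => by
    by_cases hX : minorFn k n i X = 0
    · simp [hX]
    · rw [Pi.mul_apply, Pi.mul_apply, Pi.pow_apply, pow_succ', mul_assoc, ← hNF X hX,
        mem_invSLn_iff.mp hinv]
  exact ⟨N + 1, this ▸ mul_mem (minorFn_mem_adjoinMinorLastCol i) hF⟩

end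

/-- the algebra of `SL_n`-invariant regular functions on `SL_{n+1}` (for
the right-multiplication action) is generated by the `n+1` minors `Mᵢ` together with
the `n+1` last-column entries `yᵢ`. -/
theorem stmt9 :
    (regularSL k n ⊓ invSLn k n :
        Subalgebra k (Matrix.SpecialLinearGroup (Fin (n + 1)) k → k))
      = Algebra.adjoin k (Set.range (minorFn k n) ∪ Set.range (lastColFn k n)) := by
  refine le_antisymm (fun φ hφ => ?_) adjoinMinorLastCol_le_regularSL_inf_invSLn
  exact Subalgebra.mem_of_finsetSum_eq_one_of_pow_smul_mem _ Finset.univ (minorFn k n)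
    (fun i => (-1 : k) ^ (i + n : ℕ) • lastColFn k n i) sum_lastColFn_mul_minorFn
    minorFn_mem_adjoinMinorLastCol
    (fun i => Subalgebra.smul_mem _ (lastColFn_mem_adjoinMinorLastCol i) _)
    φ (exists_minorFn_pow_mul_mem hφ)
end

section
/- Let T be the diagonal maximal torus of SL_{n+1}(k) acting on SL_{n+1}(k) by left multiplication and let H = S(GL_n × GL₁) act by right multiplication. Then the algebra of (T × H)-invariant regular functions on SL_{n+1}(k) is a polynomial algebra freely generated by the n functions M₁y₁, …, Mₙyₙ, where Mᵢ is the minor obtained by deleting row i and the last column and yᵢ is the (i, n+1) entry. -/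
variable (k : Type) [Field k] [CharZero k] [IsAlgClosed k] (n : ℕ)

/-- A matrix of `SL_{n+1}` lies in the diagonal maximal torus `T`. -/
def IsDiagSL (t : Matrix.SpecialLinearGroup (Fin (n + 1)) k) : Prop :=
  ∀ i j : Fin (n + 1), i ≠ j → t.1 i j = 0

/-- A matrix of `SL_{n+1}` lies in `H = S(GL_n × GL₁)`, the subgroup of block-diagonal
matrices with blocks of sizes `n` and `1`. -/
def IsBlockDiagSL (h : Matrix.SpecialLinearGroup (Fin (n + 1)) k) : Prop :=
  ∀ i : Fin n, h.1 i.castSucc (Fin.last n) = 0 ∧ h.1 (Fin.last n) i.castSucc = 0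

/-- Functions invariant under `t·X = tX` for `t ∈ T` and `h·X = Xh⁻¹` for
`h ∈ S(GL_n × GL₁)`. -/
def invTH : Subalgebra k (Matrix.SpecialLinearGroup (Fin (n + 1)) k → k) where
  carrier := {φ | (∀ t, IsDiagSL k n t → ∀ X, φ (t * X) = φ X) ∧
    (∀ h, IsBlockDiagSL k n h → ∀ X, φ (X * h⁻¹) = φ X)}
  mul_mem' := by
    intro a b ha hb
    exact ⟨fun t ht X => by simp [Pi.mul_apply, ha.1 t ht X, hb.1 t ht X],
      fun h hh X => by simp [Pi.mul_apply, ha.2 h hh X, hb.2 h hh X]⟩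
  add_mem' := by
    intro a b ha hb
    exact ⟨fun t ht X => by simp [Pi.add_apply, ha.1 t ht X, hb.1 t ht X],
      fun h hh X => by simp [Pi.add_apply, ha.2 h hh X, hb.2 h hh X]⟩
  algebraMap_mem' := by exact fun c => ⟨fun t ht X => rfl, fun h hh X => rfl⟩

/-- The function `Mᵢyᵢ` for `i = 1,…,n`: the minor obtained by deleting row `i` and the
last column, times the `(i, n+1)` entry. -/
def MyFn (i : Fin n) : Matrix.SpecialLinearGroup (Fin (n + 1)) k → k :=
  fun X => (X.1.submatrix i.castSucc.succAbove Fin.castSucc).det * X.1 i.castSucc (Fin.last n)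

/-!
Since `X⁻¹ = adj X` on `SL_{n+1}`, the minor `Mᵢ` is `±(X⁻¹)_{n+1,i}`, so
`Mᵢyᵢ = ±(X⁻¹)_{n+1,i} X_{i,n+1}` is visibly invariant under `X ↦ tXh⁻¹`. Where
`det C · ∏ yᵢ ≠ 0` (`C` the top-left `n × n` block), `T × H` moves `X` to the normal form
`[[1, 𝟙], [c, 1 + Σ c]]`, whose invariants are `±cᵢ`; so an invariant regular function `φ` agrees
there with `P(M₁y₁, …, Mₙyₙ)`, where `P` is the polynomial `φ ∘ normalForm`. This locus is
dense: Gaussian elimination puts every `X` on a polynomial curve in `SL_{n+1}` along which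
`det C · ∏ yᵢ` is a nonzero polynomial, so a regular function vanishing on the locus vanishes
at `X`. The normal form is also a section of `(M₁y₁, …, Mₙyₙ)`, which gives algebraic
independence.
-/

open Matrix
open scoped MatrixGroups

theorem MvPolynomial.aeval_pi_apply {σ R α : Type*} [CommSemiring R] (F : σ → α → R)
    (P : MvPolynomial σ R) (x : α) :
    MvPolynomial.aeval F P x = MvPolynomial.eval (fun i => F i x) P := by
  simpa using congrArg (· P) (MvPolynomial.comp_aeval F (Pi.evalAlgHom R (fun _ => R) x))

lemma Matrix.mul_apply_of_col_eq_zero {ι R : Type*} [Fintype ι] [CommRing R] (A : Matrix ι ι R)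
    {M : Matrix ι ι R} {j : ι} (hM : ∀ r ≠ j, M r j = 0) (i : ι) :
    (A * M) i j = A i j * M j j := by
  rw [mul_apply, Finset.sum_eq_single j (fun r _ hr => by rw [hM r hr, mul_zero]) (by simp)]

lemma Matrix.mul_apply_of_row_eq_zero {ι R : Type*} [Fintype ι] [CommRing R] (A : Matrix ι ι R)
    {M : Matrix ι ι R} {i : ι} (hM : ∀ r ≠ i, M i r = 0) (j : ι) :
    (M * A) i j = M i i * A i j := by
  rw [mul_apply, Finset.sum_eq_single i (fun r _ hr => by rw [hM r hr, zero_mul]) (by simp)]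

lemma neg_neg_one_pow_mul_neg_neg_one_pow_mul {R : Type*} [CommRing R] (j : ℕ) (x : R) :
    -(-1) ^ j * (-(-1) ^ j * x) = x := by
  rw [← mul_assoc, neg_mul_neg, ← pow_add, Even.neg_one_pow ⟨j, rfl⟩, one_mul]

namespace SLInvariants

section Blocks

variable {R : Type*} {m : ℕ}

def blocks (A : Matrix (Fin m) (Fin m) R) (b c : Fin m → R) (d : R) :
    Matrix (Fin (m + 1)) (Fin (m + 1)) R :=
  reindex finSumFinEquiv finSumFinEquiv
    (fromBlocks A (replicateCol (Fin 1) b) (replicateRow (Fin 1) c) (of fun _ _ => d))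

variable (A : Matrix (Fin m) (Fin m) R) (b c : Fin m → R) (d : R)

@[simp] lemma blocks_apply_castSucc_castSucc (i j : Fin m) :
    blocks A b c d i.castSucc j.castSucc = A i j := by
  simp [blocks]

@[simp] lemma blocks_apply_castSucc_last (i : Fin m) :
    blocks A b c d i.castSucc (Fin.last m) = b i := by
  simp [blocks]

@[simp] lemma blocks_apply_last_castSucc (j : Fin m) :
    blocks A b c d (Fin.last m) j.castSucc = c j := by
  simp [blocks]

@[simp] lemma blocks_apply_last_last : blocks A b c d (Fin.last m) (Fin.last m) = d := by
  simp [blocks]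

@[simp] lemma blocks_submatrix_castSucc_castSucc :
    (blocks A b c d).submatrix Fin.castSucc Fin.castSucc = A := by
  ext; simp

lemma eq_blocks (M : Matrix (Fin (m + 1)) (Fin (m + 1)) R) :
    M = blocks (M.submatrix Fin.castSucc Fin.castSucc) (fun i => M i.castSucc (Fin.last m))
      (fun j => M (Fin.last m) j.castSucc) (M (Fin.last m) (Fin.last m)) := by
  ext i j
  induction i using Fin.lastCases <;> induction j using Fin.lastCases <;> simp

end Blocks

section BlocksRing

variable {R : Type*} [CommRing R] {m : ℕ}
variable (A : Matrix (Fin m) (Fin m) R) (b c : Fin m → R) (d : R)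

lemma blocks_mul_blocks (A' : Matrix (Fin m) (Fin m) R) (b' c' : Fin m → R) (d' : R) :
    blocks A b c d * blocks A' b' c' d' =
      blocks (A * A' + vecMulVec b c') (A *ᵥ b' + d' • b) (c ᵥ* A' + d • c')
        (c ⬝ᵥ b' + d * d') := by
  ext i j
  induction i using Fin.lastCases <;> induction j using Fin.lastCases <;>
    simp [mul_apply, Fin.sum_univ_castSucc, mulVec, vecMul, dotProduct, vecMulVec, mul_comm]

lemma det_blocks_zero_zero : (blocks A 0 0 d).det = A.det * d := by
  simp [blocks, det_fromBlocks_zero₂₁]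

lemma det_blocks_one : (blocks 1 b c d).det = d - c ⬝ᵥ b := by
  simp [blocks, det_fromBlocks_one₁₁]

lemma det_blocks_one_const_one (c : Fin m → R) (w : R) :
    (blocks 1 (fun _ => 1) c w).det = w - ∑ i, c i := by
  simp [det_blocks_one, dotProduct]

lemma blocks_one : blocks (1 : Matrix (Fin m) (Fin m) R) 0 0 1 = 1 := by
  ext i j
  induction i using Fin.lastCases <;> induction j using Fin.lastCases <;>
    simp [one_apply, (Fin.castSucc_lt_last _).ne']

lemma diagonal_eq_blocks (D : Fin (m + 1) → R) :
    diagonal D = blocks (diagonal fun i => D i.castSucc) 0 0 (D (Fin.last m)) := by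
  ext i j
  induction i using Fin.lastCases <;> induction j using Fin.lastCases <;>
    simp [diagonal_apply, (Fin.castSucc_lt_last _).ne']

lemma blocks_one_eq_one_add_smul (s : R) :
    blocks 1 (fun _ => s) 0 1 = 1 + s • blocks (0 : Matrix (Fin m) (Fin m) R) (fun _ => 1) 0 0 := by
  ext i j
  induction i using Fin.lastCases <;> induction j using Fin.lastCases <;>
    simp [one_apply, (Fin.castSucc_lt_last _).ne']

def topLeftDetMulLastColProd (M : Matrix (Fin (m + 1)) (Fin (m + 1)) R) : R :=
  (M.submatrix Fin.castSucc Fin.castSucc).det * ∏ i : Fin m, M i.castSucc (Fin.last m)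

@[simp] lemma topLeftDetMulLastColProd_blocks :
    topLeftDetMulLastColProd (blocks A b c d) = A.det * ∏ i, b i := by
  simp [topLeftDetMulLastColProd]

end BlocksRing

section EntriesIn

variable {α ι R : Type*} [CommRing R]

def EntriesIn (S : Subalgebra R (α → R)) (M : α → Matrix ι ι R) : Prop :=
  ∀ i j, (fun x => M x i j) ∈ S

variable {S : Subalgebra R (α → R)} {M N : α → Matrix ι ι R}

lemma EntriesIn.const (A : Matrix ι ι R) : EntriesIn S fun _ => A :=
  fun i j => S.algebraMap_mem (A i j)

lemma EntriesIn.mul [Fintype ι] (hM : EntriesIn S M) (hN : EntriesIn S N) :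
    EntriesIn S (M * N) := by
  intro i j
  have : (fun x => (M * N) x i j) = ∑ r, (fun x => M x i r) * fun x => N x r j := by
    ext x; simp [mul_apply]
  rw [this]
  exact S.sum_mem fun r _ => S.mul_mem (hM i r) (hN r j)

lemma EntriesIn.submatrix {κ : Type*} (hM : EntriesIn S M) (f g : κ → ι) :
    EntriesIn S fun x => (M x).submatrix f g :=
  fun i j => hM (f i) (g j)

lemma EntriesIn.det_mem [Fintype ι] [DecidableEq ι] (hM : EntriesIn S M) :
    (fun x => (M x).det) ∈ S := by
  have : (fun x => (M x).det) =
      ∑ σ : Equiv.Perm ι, (Equiv.Perm.sign σ : R) • ∏ i, fun x => M x (σ i) i := by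
    ext x; simp [det_apply', Finset.prod_apply]
  rw [this]
  exact S.sum_mem fun σ _ => S.smul_mem (S.prod_mem fun i _ => hM (σ i) i) _

end EntriesIn

section PolyFns

variable (σ K : Type*) [Field K]

noncomputable def polyFns : Subalgebra K ((σ → K) → K) :=
  (MvPolynomial.aeval fun i (x : σ → K) => x i).range

variable {σ K}

lemma coord_mem_polyFns (i : σ) : (fun x : σ → K => x i) ∈ polyFns σ K :=
  ⟨MvPolynomial.X i, MvPolynomial.aeval_X _ i⟩

lemma eq_zero_or_eq_zero_of_mul_eq_zero_of_mem_polyFns [Infinite K] {f g : (σ → K) → K}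
    (hf : f ∈ polyFns σ K) (hg : g ∈ polyFns σ K) (hfg : f * g = 0) : f = 0 ∨ g = 0 := by
  obtain ⟨P, rfl⟩ := hf
  obtain ⟨Q, rfl⟩ := hg
  have hPQ : P * Q = 0 := MvPolynomial.funext fun x => by
    simpa [MvPolynomial.aeval_pi_apply] using congrFun hfg x
  rcases mul_eq_zero.1 hPQ with rfl | rfl <;> simp

lemma algebraicIndependent_of_section [Infinite K] {α : Type*} (F : σ → α → K)
    (s : (σ → K) → α) (hs : ∀ a i, F i (s a) = a i) : AlgebraicIndependent K F := by
  rw [algebraicIndependent_iff]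
  intro P hP
  refine MvPolynomial.funext fun a => ?_
  simpa [MvPolynomial.aeval_pi_apply, hs] using congrFun hP (s a)

end PolyFns

section Regular

variable {K : Type} [Field K] {m : ℕ}

lemma entriesIn_regularSL : EntriesIn (regularSL K m) fun X => X.1 :=
  fun p q => Algebra.subset_adjoin ⟨(p, q), rfl⟩

lemma comp_mem_of_mem_regularSL {β : Type*} {S : Subalgebra K (β → K)} {f : SL(m + 1, K) → K}
    (hf : f ∈ regularSL K m) {Γ : β → SL(m + 1, K)} (hΓ : EntriesIn S fun u => (Γ u).1) :
    f ∘ Γ ∈ S := by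
  induction hf using Algebra.adjoin_induction with
  | mem x hx =>
    obtain ⟨⟨p, q⟩, rfl⟩ := hx
    exact hΓ p q
  | algebraMap r => exact S.algebraMap_mem r
  | add x y _ _ hx hy => exact S.add_mem hx hy
  | mul x y _ _ hx hy => exact S.mul_mem hx hy

lemma MyFn_mem_regularSL (i : Fin m) : MyFn K m i ∈ regularSL K m :=
  Subalgebra.mul_mem _ (entriesIn_regularSL.submatrix _ _).det_mem (entriesIn_regularSL _ _)

lemma topLeftDetMulLastColProd_mem_regularSL :
    (fun X : SL(m + 1, K) => topLeftDetMulLastColProd X.1) ∈ regularSL K m := by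
  have : (fun X : SL(m + 1, K) => topLeftDetMulLastColProd X.1) =
      (fun X => (X.1.submatrix Fin.castSucc Fin.castSucc).det) *
        ∏ i : Fin m, fun X => X.1 i.castSucc (Fin.last m) := by
    ext X; simp [topLeftDetMulLastColProd, Finset.prod_apply]
  rw [this]
  exact Subalgebra.mul_mem _ (entriesIn_regularSL.submatrix _ _).det_mem
    (Subalgebra.prod_mem _ fun i _ => entriesIn_regularSL _ _)

end Regular

section Invariance

variable {K : Type} [Field K] {m : ℕ}

lemma MyFn_eq (i : Fin m) (X : SL(m + 1, K)) :
    MyFn K m i X =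
      (-1) ^ ((i : ℕ) + m) * (X⁻¹).1 (Fin.last m) i.castSucc * X.1 i.castSucc (Fin.last m) := by
  rw [Matrix.SpecialLinearGroup.coe_inv, adjugate_fin_succ_eq_det_submatrix, Fin.succAbove_last,
    Fin.val_castSucc, Fin.val_last, ← mul_assoc, ← pow_add, Even.neg_one_pow ⟨_, rfl⟩, one_mul]
  rfl

lemma MyFn_diag_mul (i : Fin m) {t : SL(m + 1, K)} (ht : IsDiagSL K m t) (X : SL(m + 1, K)) :
    MyFn K m i (t * X) = MyFn K m i X := by
  have hcol : ∀ r ≠ i.castSucc, t.1 r i.castSucc = 0 := fun r hr => ht r _ hr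
  have hrow : ∀ r ≠ i.castSucc, t.1 i.castSucc r = 0 := fun r hr => ht _ r hr.symm
  have hinv : ((t * X)⁻¹).1 (Fin.last m) i.castSucc * t.1 i.castSucc i.castSucc =
      (X⁻¹).1 (Fin.last m) i.castSucc := by
    rw [← mul_apply_of_col_eq_zero _ hcol, ← Matrix.SpecialLinearGroup.coe_mul, _root_.mul_inv_rev,
      inv_mul_cancel_right]
  rw [MyFn_eq, MyFn_eq, ← hinv, Matrix.SpecialLinearGroup.coe_mul, mul_apply_of_row_eq_zero _ hrow]
  ring

lemma MyFn_mul_inv_blockDiag (i : Fin m) {h : SL(m + 1, K)} (hh : IsBlockDiagSL K m h)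
    (X : SL(m + 1, K)) : MyFn K m i (X * h⁻¹) = MyFn K m i X := by
  have hcol : ∀ r ≠ Fin.last m, h.1 r (Fin.last m) = 0 := fun r hr => by
    obtain ⟨r, rfl⟩ := Fin.exists_castSucc_eq.2 hr
    exact (hh r).1
  have hrow : ∀ r ≠ Fin.last m, h.1 (Fin.last m) r = 0 := fun r hr => by
    obtain ⟨r, rfl⟩ := Fin.exists_castSucc_eq.2 hr
    exact (hh r).2
  have hcoord : (X * h⁻¹).1 i.castSucc (Fin.last m) * h.1 (Fin.last m) (Fin.last m) =
      X.1 i.castSucc (Fin.last m) := by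
    rw [← mul_apply_of_col_eq_zero _ hcol, ← Matrix.SpecialLinearGroup.coe_mul,
      inv_mul_cancel_right]
  rw [MyFn_eq, MyFn_eq, ← hcoord, _root_.mul_inv_rev, inv_inv, Matrix.SpecialLinearGroup.coe_mul,
    mul_apply_of_row_eq_zero _ hrow]
  ring

lemma MyFn_mem_invTH (i : Fin m) : MyFn K m i ∈ invTH K m :=
  ⟨fun _ ht X => MyFn_diag_mul i ht X, fun _ hh X => MyFn_mul_inv_blockDiag i hh X⟩

end Invariance

section NormalForm

variable {K : Type} [Field K] {m : ℕ}

def normalForm (c : Fin m → K) : SL(m + 1, K) :=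
  ⟨blocks 1 (fun _ => 1) c (1 + ∑ i, c i), by rw [det_blocks_one_const_one]; ring⟩

lemma coe_normalForm (c : Fin m → K) :
    (normalForm c).1 = blocks 1 (fun _ => 1) c (1 + ∑ i, c i) :=
  rfl

lemma eq_normalForm {Y : SL(m + 1, K)} {c : Fin m → K} {w : K}
    (hY : Y.1 = blocks 1 (fun _ => 1) c w) : Y = normalForm c := by
  have hw : w = 1 + ∑ i, c i := by
    have := Y.2
    rw [hY, det_blocks_one_const_one] at this
    linear_combination this
  exact Subtype.ext (hY.trans (by rw [hw]; rfl))

lemma MyFn_normalForm (c : Fin m → K) (i : Fin m) :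
    MyFn K m i (normalForm c) = -(-1) ^ ((i : ℕ) + m) * c i := by
  set u := fun j : Fin (m + 1) => ((normalForm c)⁻¹).1 (Fin.last m) j
  have h : ((normalForm c)⁻¹).1 * (normalForm c).1 = 1 := by
    rw [← Matrix.SpecialLinearGroup.coe_mul, inv_mul_cancel, Matrix.SpecialLinearGroup.coe_one]
  have hrow (j : Fin m) : u j.castSucc + u (Fin.last m) * c j = 0 := by
    simpa [mul_apply, Fin.sum_univ_castSucc, coe_normalForm, one_apply, u,
      (Fin.castSucc_lt_last _).ne'] using congrFun₂ h (Fin.last m) j.castSucc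
  have hcorner : ∑ j : Fin m, u j.castSucc + u (Fin.last m) * (1 + ∑ j, c j) = 1 := by
    simpa [mul_apply, Fin.sum_univ_castSucc, coe_normalForm, u]
      using congrFun₂ h (Fin.last m) (Fin.last m)
  have hlast : u (Fin.last m) = 1 := by
    have : ∑ j : Fin m, u j.castSucc = -(u (Fin.last m) * ∑ j, c j) := by
      rw [Finset.mul_sum, ← Finset.sum_neg_distrib]
      exact Finset.sum_congr rfl fun j _ => eq_neg_of_add_eq_zero_left (hrow j)
    linear_combination hcorner - this
  have hu : u i.castSucc = -c i := by linear_combination hrow i - c i * hlast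
  simp only [u] at hu
  rw [MyFn_eq, coe_normalForm, blocks_apply_castSucc_last, hu]
  ring

lemma coe_inv_of_eq_blocks {h : SL(m + 1, K)} {B : Matrix (Fin m) (Fin m) K} {e : K}
    (hh : h.1 = blocks B 0 0 e) : (h⁻¹).1 = blocks B⁻¹ 0 0 e⁻¹ := by
  have hdet : B.det * e = 1 := by rw [← det_blocks_zero_zero, ← hh, h.2]
  have hadj : adjugate h.1 = h.1⁻¹ := by rw [inv_def, h.2, Ring.inverse_one, one_smul]
  rw [Matrix.SpecialLinearGroup.coe_inv, hadj]
  refine inv_eq_right_inv ?_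
  rw [hh, blocks_mul_blocks, mul_nonsing_inv _ (left_ne_zero_of_mul_eq_one hdet).isUnit,
    mul_inv_cancel₀ (right_ne_zero_of_mul_eq_one hdet)]
  simpa using blocks_one

lemma exists_blocks_diagonal_mul_mul_blocks_inv (C : Matrix (Fin m) (Fin m) K) (y c : Fin m → K)
    (w : K) (D : Fin m → K) (τ e : K) (hDC : (diagonal D * C).det ≠ 0) :
    ∃ c' w', blocks (diagonal D) 0 0 τ * (blocks C y c w * blocks (diagonal D * C)⁻¹ 0 0 e⁻¹) =
      blocks 1 (fun i => D i * y i / e) c' w' := by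
  rw [blocks_mul_blocks, blocks_mul_blocks]
  have hA : diagonal D * (C * (diagonal D * C)⁻¹ + vecMulVec y 0) +
      vecMulVec 0 (c ᵥ* (diagonal D * C)⁻¹ + w • 0) = 1 := by
    simp [← Matrix.mul_assoc, mul_nonsing_inv _ hDC.isUnit]
  have hb : diagonal D *ᵥ (C *ᵥ 0 + e⁻¹ • y) + (c ⬝ᵥ 0 + w * e⁻¹) • 0 =
      fun i => D i * y i / e := by
    ext i
    simp [mulVec_diagonal]
    ring
  rw [hA, hb]
  exact ⟨_, _, rfl⟩

lemma exists_prod_div_mul_mul_eq_one [IsAlgClosed K] {δ : K} {y : Fin m → K} (hδ : δ ≠ 0)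
    (hy : ∀ i, y i ≠ 0) : ∃ e, (∏ i, e / y i) * δ * e = 1 := by
  obtain ⟨e, he⟩ := IsAlgClosed.exists_pow_nat_eq ((∏ i, y i) / δ) m.succ_pos
  refine ⟨e, ?_⟩
  have he' : e ^ (m + 1) * δ = ∏ i, y i := by rw [he, div_mul_cancel₀ _ hδ]
  rw [Finset.prod_div_distrib, Finset.prod_const, Finset.card_univ, Fintype.card_fin]
  field_simp [Finset.prod_ne_zero_iff.2 fun i _ => hy i]
  linear_combination he'

lemma exists_diag_mul_mul_inv_blockDiag_eq_normalForm [IsAlgClosed K] (X : SL(m + 1, K))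
    (hX : topLeftDetMulLastColProd X.1 ≠ 0) :
    ∃ t h, IsDiagSL K m t ∧ IsBlockDiagSL K m h ∧ ∃ c, t * (X * h⁻¹) = normalForm c := by
  set C := X.1.submatrix Fin.castSucc Fin.castSucc
  set y := fun i : Fin m => X.1 i.castSucc (Fin.last m)
  have hC : C.det ≠ 0 := left_ne_zero_of_mul hX
  have hy (i : Fin m) : y i ≠ 0 :=
    Finset.prod_ne_zero_iff.1 (right_ne_zero_of_mul hX) i (Finset.mem_univ i)
  -- `Dᵢ = e / yᵢ` turns the last column into `𝟙`; `e` is chosen so that `t` and `h` lie in `SL`.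
  obtain ⟨e, hD⟩ := exists_prod_div_mul_mul_eq_one hC hy
  set D := fun i => e / y i
  let t : SL(m + 1, K) := ⟨diagonal (Fin.snoc D (C.det * e)), by
    rw [det_diagonal, Fin.prod_univ_castSucc]
    simp only [Fin.snoc_castSucc, Fin.snoc_last]
    linear_combination hD⟩
  let h : SL(m + 1, K) :=
    ⟨blocks (diagonal D * C) 0 0 e, by rw [det_blocks_zero_zero, det_mul, det_diagonal, hD]⟩
  have hDC : (diagonal D * C).det ≠ 0 := by
    rw [det_mul, det_diagonal]
    exact left_ne_zero_of_mul_eq_one hD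
  obtain ⟨c, w, hc⟩ := exists_blocks_diagonal_mul_mul_blocks_inv C y
    (X.1 (Fin.last m) ·.castSucc) (X.1 (Fin.last m) (Fin.last m)) D (C.det * e) e hDC
  have hDy : (fun i => D i * y i / e) = fun _ => 1 := by
    ext i
    simp only [D, div_mul_cancel₀ _ (hy i), div_self (right_ne_zero_of_mul_eq_one hD)]
  have ht : t.1 = blocks (diagonal D) 0 0 (C.det * e) := (diagonal_eq_blocks _).trans (by simp)
  have hX' : X.1 = blocks C y (X.1 (Fin.last m) ·.castSucc) (X.1 (Fin.last m) (Fin.last m)) :=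
    eq_blocks X.1
  refine ⟨t, h, fun i j hij => diagonal_apply_ne _ hij, fun i => by simp [h], c,
    eq_normalForm (w := w) ?_⟩
  rw [Matrix.SpecialLinearGroup.coe_mul, Matrix.SpecialLinearGroup.coe_mul,
    coe_inv_of_eq_blocks rfl, ht, hX', hc, hDy]

def ofInvariants (a : Fin m → K) : SL(m + 1, K) :=
  normalForm fun i => -(-1) ^ ((i : ℕ) + m) * a i

lemma MyFn_ofInvariants (a : Fin m → K) (i : Fin m) : MyFn K m i (ofInvariants a) = a i := by
  rw [ofInvariants, MyFn_normalForm, neg_neg_one_pow_mul_neg_neg_one_pow_mul]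

lemma apply_eq_apply_ofInvariants [IsAlgClosed K] {φ : SL(m + 1, K) → K} (hφ : φ ∈ invTH K m)
    (X : SL(m + 1, K)) (hX : topLeftDetMulLastColProd X.1 ≠ 0) :
    φ X = φ (ofInvariants fun i => MyFn K m i X) := by
  obtain ⟨t, h, ht, hh, c, hY⟩ := exists_diag_mul_mul_inv_blockDiag_eq_normalForm X hX
  have hinv (i : Fin m) : MyFn K m i X = -(-1) ^ ((i : ℕ) + m) * c i := by
    rw [← MyFn_normalForm, ← hY, MyFn_diag_mul i ht, MyFn_mul_inv_blockDiag i hh]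
  simp only [ofInvariants, hinv, neg_neg_one_pow_mul_neg_neg_one_pow_mul]
  rw [← hY, hφ.1 t ht, hφ.2 h hh]

lemma entriesIn_ofInvariants :
    EntriesIn (polyFns (Fin m) K) fun a => (ofInvariants a : SL(m + 1, K)).1 := by
  intro p q
  induction p using Fin.lastCases <;> induction q using Fin.lastCases
  all_goals simp only [ofInvariants, coe_normalForm, blocks_apply_last_last,
    blocks_apply_last_castSucc, blocks_apply_castSucc_last, blocks_apply_castSucc_castSucc]
  · exact ⟨1 + ∑ i : Fin m, MvPolynomial.C (-(-1) ^ ((i : ℕ) + m)) * MvPolynomial.X i, by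
      ext; simp [MvPolynomial.aeval_pi_apply]⟩
  · rename_i j
    exact ⟨MvPolynomial.C (-(-1) ^ ((j : ℕ) + m)) * MvPolynomial.X j, by
      ext; simp [MvPolynomial.aeval_pi_apply]⟩
  · exact one_mem _
  · exact (polyFns _ K).algebraMap_mem _

end NormalForm

section Density

variable {K : Type} [Field K] {m : ℕ}

lemma entriesIn_one_add_smul {ι : Type*} [DecidableEq ι] (N : Matrix ι ι K) :
    EntriesIn (polyFns Unit K) fun u => 1 + u () • N := by
  intro i j
  have : (fun u : Unit → K => (1 + u () • N) i j) =
      (fun _ => (1 : Matrix ι ι K) i j) + (fun u => u ()) * fun _ => N i j := by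
    ext u; simp
  rw [this]
  exact add_mem ((polyFns Unit K).algebraMap_mem _)
    (mul_mem (coord_mem_polyFns ()) ((polyFns Unit K).algebraMap_mem _))

def transvecCurve {ι : Type*} [Fintype ι] [DecidableEq ι] (L : List (TransvectionStruct ι K))
    (s : K) : Matrix ι ι K :=
  (L.map fun t => transvection t.i t.j (s * t.c)).prod

variable {ι : Type*} [Fintype ι] [DecidableEq ι] (L : List (TransvectionStruct ι K))

lemma det_transvecCurve (s : K) : (transvecCurve L s).det = 1 := by
  induction L with
  | nil => simp [transvecCurve]
  | cons t L ih =>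
    simp only [transvecCurve, List.map_cons, List.prod_cons] at ih ⊢
    rw [det_mul, det_transvection_of_ne _ _ t.hij, ih, one_mul]

lemma transvecCurve_zero : transvecCurve L 0 = 1 := by
  simp [transvecCurve]

lemma transvecCurve_one : transvecCurve L 1 = (L.map TransvectionStruct.toMatrix).prod := by
  simp only [transvecCurve, one_mul]
  rfl

lemma entriesIn_transvecCurve :
    EntriesIn (polyFns Unit K) fun u => transvecCurve L (u ()) := by
  induction L with
  | nil => simpa [transvecCurve] using EntriesIn.const 1
  | cons t L ih =>
    simp only [transvecCurve, List.map_cons, List.prod_cons] at ih ⊢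
    have : (fun u : Unit → K => transvection t.i t.j (u () * t.c)) =
        fun u => 1 + u () • single t.i t.j t.c := by
      ext1 u; rw [transvection, smul_single, smul_eq_mul]
    exact EntriesIn.mul (this ▸ entriesIn_one_add_smul _) ih

lemma exists_polyCurve_to_topLeftDetMulLastColProd_ne_zero (X : SL(m + 1, K)) :
    ∃ Γ : (Unit → K) → SL(m + 1, K),
      EntriesIn (polyFns Unit K) (fun u => (Γ u).1) ∧ Γ 0 = X ∧
        topLeftDetMulLastColProd (Γ 1).1 ≠ 0 := by
  -- The curve `s ↦ L(s) X L'(s) [[1, s𝟙], [0, 1]]`, where `L(1) X L'(1) = D` is diagonal.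
  obtain ⟨L, L', D, hD⟩ := Pivot.exists_list_transvec_mul_mul_list_transvec_eq_diagonal X.1
  have hE (s : K) : (blocks 1 (fun _ => s) 0 1 : Matrix (Fin (m + 1)) (Fin (m + 1)) K).det = 1 := by
    simp [det_blocks_one]
  refine ⟨fun u => ⟨transvecCurve L (u ()) * X.1 * transvecCurve L' (u ()) *
    blocks 1 (fun _ => u ()) 0 1, by simp [det_transvecCurve, hE]⟩, ?_, ?_, ?_⟩
  · refine (((entriesIn_transvecCurve L).mul (EntriesIn.const X.1)).mul
      (entriesIn_transvecCurve L')).mul ?_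
    simpa only [blocks_one_eq_one_add_smul] using entriesIn_one_add_smul _
  · ext1
    simp [transvecCurve_zero, ← Pi.zero_def, blocks_one]
  · have hprod : ∏ i, D i = 1 := by
      rw [← det_diagonal, ← hD, det_mul, det_mul, TransvectionStruct.det_toMatrix_prod,
        TransvectionStruct.det_toMatrix_prod, X.2, one_mul, one_mul]
    have hD' : ∏ i : Fin m, D i.castSucc ≠ 0 := by
      rw [Fin.prod_univ_castSucc] at hprod
      exact left_ne_zero_of_mul_eq_one hprod
    simp only [Pi.one_apply, transvecCurve_one, hD]
    rw [diagonal_eq_blocks, blocks_mul_blocks]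
    simpa [mulVec_diagonal] using hD'

lemma eq_zero_of_forall_topLeftDetMulLastColProd_ne_zero [Infinite K] {f : SL(m + 1, K) → K}
    (hf : f ∈ regularSL K m) (h0 : ∀ X, topLeftDetMulLastColProd X.1 ≠ 0 → f X = 0) :
    f = 0 := by
  funext X
  obtain ⟨Γ, hΓ, hΓ0, hΓ1⟩ := exists_polyCurve_to_topLeftDetMulLastColProd_ne_zero X
  have hfg : (f ∘ Γ) * ((fun Y => topLeftDetMulLastColProd Y.1) ∘ Γ) = 0 := by
    funext u
    by_cases hu : topLeftDetMulLastColProd (Γ u).1 = 0 <;> simp [hu, h0]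
  rcases eq_zero_or_eq_zero_of_mul_eq_zero_of_mem_polyFns (comp_mem_of_mem_regularSL hf hΓ)
    (comp_mem_of_mem_regularSL topLeftDetMulLastColProd_mem_regularSL hΓ) hfg with h | h
  · simpa [hΓ0] using congrFun h 0
  · exact absurd (congrFun h 1) hΓ1

end Density

section Main

variable {K : Type} [Field K] {m : ℕ}

lemma algebraicIndependent_MyFn [Infinite K] : AlgebraicIndependent K (MyFn K m) :=
  algebraicIndependent_of_section _ ofInvariants MyFn_ofInvariants

lemma adjoin_MyFn_le : Algebra.adjoin K (Set.range (MyFn K m)) ≤ regularSL K m ⊓ invTH K m :=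
  Algebra.adjoin_le (Set.range_subset_iff.2 fun i => ⟨MyFn_mem_regularSL i, MyFn_mem_invTH i⟩)

lemma mem_adjoin_MyFn [IsAlgClosed K] {φ : SL(m + 1, K) → K} (hreg : φ ∈ regularSL K m)
    (hinv : φ ∈ invTH K m) : φ ∈ Algebra.adjoin K (Set.range (MyFn K m)) := by
  obtain ⟨P, hP⟩ := comp_mem_of_mem_regularSL hreg entriesIn_ofInvariants
  have hP' (a : Fin m → K) : φ (ofInvariants a) = MvPolynomial.eval a P := by
    simpa [MvPolynomial.aeval_pi_apply] using (congrFun hP a).symm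
  have hψ : MvPolynomial.aeval (MyFn K m) P ∈ Algebra.adjoin K (Set.range (MyFn K m)) := by
    rw [Algebra.adjoin_range_eq_range_aeval]
    exact ⟨P, rfl⟩
  suffices φ = MvPolynomial.aeval (MyFn K m) P by rwa [this]
  rw [← sub_eq_zero]
  refine eq_zero_of_forall_topLeftDetMulLastColProd_ne_zero
    (sub_mem hreg (adjoin_MyFn_le hψ).1) fun X hX => ?_
  rw [Pi.sub_apply, sub_eq_zero, apply_eq_apply_ofInvariants hinv X hX, hP',
    MvPolynomial.aeval_pi_apply]

end Main

end SLInvariants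

/-- the algebra of `(T × S(GL_n × GL₁))`-invariant regular functions on
`SL_{n+1}` is a polynomial algebra freely generated by the `n` functions
`M₁y₁, …, Mₙyₙ`. -/
theorem stmt10 :
    AlgebraicIndependent k (MyFn k n) ∧
    (regularSL k n ⊓ invTH k n :
        Subalgebra k (Matrix.SpecialLinearGroup (Fin (n + 1)) k → k))
      = Algebra.adjoin k (Set.range (MyFn k n)) :=
  ⟨SLInvariants.algebraicIndependent_MyFn,
    le_antisymm (fun _ hφ => SLInvariants.mem_adjoin_MyFn hφ.1 hφ.2)
      SLInvariants.adjoin_MyFn_le⟩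
end

section
/- Let Z ⊂ k^{2n} be the affine quadric {x₁x′₁ + ⋯ + xₙx′ₙ = 1} with the action of the torus T = (k^×)ⁿ given by t·xᵢ = tᵢxᵢ, t·x′ᵢ = tᵢ⁻¹x′ᵢ. Then the categorical quotient Z ⫽ T is isomorphic to the affine space 𝔸^{n−1}, namely the hyperplane {z₁ + ⋯ + zₙ = 1} in 𝔸ⁿ with coordinates zᵢ = xᵢx′ᵢ. -/
variable (k : Type) [Field k] [CharZero k] [IsAlgClosed k] (n : ℕ)

/-- The affine quadric `Z = {x₁x′₁ + ⋯ + xₙx′ₙ = 1} ⊆ k^{2n}` (coordinates indexed by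
`Fin n ⊕ Fin n`, with `inl i ↦ xᵢ` and `inr i ↦ x′ᵢ`). -/
def Quadric : Set ((Fin n ⊕ Fin n) → k) :=
  {v | ∑ i : Fin n, v (Sum.inl i) * v (Sum.inr i) = 1}

/-- The action of the torus `T = (kˣ)ⁿ` on `Z`: `t·xᵢ = tᵢxᵢ`, `t·x′ᵢ = tᵢ⁻¹x′ᵢ`. -/
def torusActZ (t : Fin n → kˣ) (v : Quadric k n) : Quadric k n :=
  ⟨fun s => Sum.elim (fun i => (t i : k) * v.1 (Sum.inl i))
      (fun i => ((t i)⁻¹ : kˣ) * v.1 (Sum.inr i)) s, by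
    have h : ∀ i : Fin n, ((t i : k) * v.1 (Sum.inl i)) *
        (((t i)⁻¹ : kˣ) * v.1 (Sum.inr i)) = v.1 (Sum.inl i) * v.1 (Sum.inr i) := by
      intro i
      have hu : (t i : k) * ((t i)⁻¹ : kˣ) = 1 := by
        rw [← Units.val_mul, mul_inv_cancel, Units.val_one]
      calc ((t i : k) * v.1 (Sum.inl i)) * (((t i)⁻¹ : kˣ) * v.1 (Sum.inr i))
          = ((t i : k) * ((t i)⁻¹ : kˣ)) * (v.1 (Sum.inl i) * v.1 (Sum.inr i)) := by ring
        _ = v.1 (Sum.inl i) * v.1 (Sum.inr i) := by rw [hu, one_mul]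
    have hv := v.2
    simp only [Quadric, Set.mem_setOf_eq, Sum.elim_inl, Sum.elim_inr] at *
    rw [Finset.sum_congr rfl fun i _ => h i, hv]⟩

/-- The algebra of regular functions on `Z`: restrictions of polynomial functions,
i.e. the subalgebra of `Z → k` generated by the coordinate functions. -/
def regularFnsZ : Subalgebra k (Quadric k n → k) :=
  Algebra.adjoin k (Set.range fun s : Fin n ⊕ Fin n => fun v : Quadric k n => v.1 s)

/-- The `T`-invariant functions on `Z`. -/
def invFnsZ : Subalgebra k (Quadric k n → k) where
  carrier := {φ | ∀ (t : Fin n → kˣ) (v : Quadric k n), φ (torusActZ k n t v) = φ v}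
  mul_mem' := by intro a b ha hb t v; simp [Pi.mul_apply, ha t v, hb t v]
  add_mem' := by intro a b ha hb t v; simp [Pi.add_apply, ha t v, hb t v]
  algebraMap_mem' := by intro c t v; rfl

/-!
A regular function on `Z` is the restriction of a polynomial `P` in the `xᵢ, x′ᵢ`. Grade `P` by
torus weights (`xᵢ` has weight `eᵢ`, `x′ᵢ` weight `-eᵢ`). At a fixed point `v`, the function
`t ↦ P(t • v)` is the combination `∑_w P_w(v) χ_w(t)` of the distinct characters
`χ_w(t) = ∏ tᵢ ^ wᵢ`, so invariance and Artin's linear independence of characters give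
`P(v) = P₀(v)`. Weight-zero monomials are monomials in `zᵢ = xᵢx′ᵢ`, hence the invariants are
generated by `z₁, …, zₙ`, and `zₙ = 1 - z₁ - ⋯ - zₙ₋₁`. Finally `z₁, …, zₙ₋₁` are algebraically
independent on `Z`: every `c ∈ kⁿ⁻¹` is attained, at `x = (c, 1 - ∑ c)`, `x′ = 1`, and `k` is
infinite.
-/

open MvPolynomial

theorem MvPolynomial.aeval_apply_eq_eval {K σ X : Type*} [CommSemiring K] (f : σ → X → K)
    (P : MvPolynomial σ K) (x : X) : aeval f P x = eval (fun s => f s x) P := by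
  have h : (Pi.evalAlgHom K (fun _ : X => K) x).comp (aeval f) = aeval fun s => f s x :=
    algHom_ext fun _ => by simp
  exact DFunLike.congr_fun h P

theorem MvPolynomial.sum_weightedHomogeneousComponent_of_subset {σ M R : Type*} [CommSemiring R]
    [AddCommMonoid M] (w : σ → M) (P : MvPolynomial σ R) {W : Finset M}
    (hW : ∀ d ∈ P.support, Finsupp.weight w d ∈ W) :
    ∑ m ∈ W, weightedHomogeneousComponent w m P = P := by
  classical
  ext d
  simp only [coeff_sum, coeff_weightedHomogeneousComponent, Finset.sum_ite_eq]
  split_ifs with h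
  · rfl
  · exact (notMem_support_iff.1 fun hd => h (hW d hd)).symm

section TorusCharacter

variable {K ι : Type*} [Field K] [Fintype ι]

def torusCharacter (w : ι → ℤ) : (ι → Kˣ) →* K where
  toFun t := ∏ i, ((t i ^ w i : Kˣ) : K)
  map_one' := by simp
  map_mul' a b := by simp only [Pi.mul_apply, mul_zpow, Units.val_mul, Finset.prod_mul_distrib]

@[simp]
theorem torusCharacter_zero : torusCharacter (0 : ι → ℤ) = (1 : (ι → Kˣ) →* K) := by
  ext t
  simp [torusCharacter]

theorem torusCharacter_mulSingle [DecidableEq ι] (w : ι → ℤ) (i : ι) (u : Kˣ) :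
    torusCharacter w (Pi.mulSingle i u) = ((u ^ w i : Kˣ) : K) := by
  rw [torusCharacter, MonoidHom.coe_mk, OneHom.coe_mk,
    Finset.prod_eq_single i (fun j _ hj => by simp [Pi.mulSingle_eq_of_ne hj]) (by simp)]
  simp

theorem not_isOfFinOrder_two [CharZero K] : ¬IsOfFinOrder (Units.mk0 (2 : K) two_ne_zero) := by
  rw [isOfFinOrder_iff_pow_eq_one]
  rintro ⟨m, hm, h⟩
  have h2 : ((2 ^ m : ℕ) : K) = ((1 : ℕ) : K) := by
    simpa using congrArg Units.val h
  have := Nat.pow_eq_one.1 (Nat.cast_injective h2)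
  omega

theorem torusCharacter_injective [CharZero K] :
    Function.Injective (torusCharacter : (ι → ℤ) → (ι → Kˣ) →* K) := by
  classical
  intro w w' h
  funext i
  have h2 := DFunLike.congr_fun h (Pi.mulSingle i (Units.mk0 2 two_ne_zero))
  rw [torusCharacter_mulSingle, torusCharacter_mulSingle] at h2
  exact injective_zpow_iff_not_isOfFinOrder.2 not_isOfFinOrder_two (Units.ext h2)

theorem linearIndependent_torusCharacter [CharZero K] :
    LinearIndependent K (fun w : ι → ℤ => ⇑(torusCharacter w : (ι → Kˣ) →* K)) :=
  (linearIndependent_monoidHom (ι → Kˣ) K).comp _ torusCharacter_injective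

end TorusCharacter

section TorusWeight

variable {R ι : Type*} [CommSemiring R] [Fintype ι] [DecidableEq ι]

def torusWeight : ι ⊕ ι → ι → ℤ :=
  Sum.elim (fun i => Pi.single i 1) (fun i => -Pi.single i 1)

theorem weight_torusWeight (d : ι ⊕ ι →₀ ℕ) :
    Finsupp.weight torusWeight d = fun i => (d (Sum.inl i) : ℤ) - d (Sum.inr i) := by
  rw [Finsupp.weight_apply, Finsupp.sum_fintype _ _ (by simp)]
  ext i
  simp [torusWeight, Fintype.sum_sum_type, Finset.sum_apply, Pi.single_apply, sub_eq_add_neg]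

theorem mem_adjoin_of_isWeightedHomogeneous_torusWeight_zero {P : MvPolynomial (ι ⊕ ι) R}
    (hP : P.IsWeightedHomogeneous torusWeight 0) :
    P ∈ Algebra.adjoin R (Set.range fun i : ι => X (Sum.inl i) * X (Sum.inr i)) := by
  rw [P.as_sum]
  refine Subalgebra.sum_mem _ fun d hd => ?_
  have hd0 : ∀ i, d (Sum.inr i) = d (Sum.inl i) := by
    intro i
    have := congrFun ((weight_torusWeight d).symm.trans (hP (mem_support_iff.1 hd))) i
    simp only [Pi.zero_apply, sub_eq_zero] at this
    exact_mod_cast this.symm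
  have hmon : monomial d (P.coeff d)
      = C (P.coeff d) * ∏ i, (X (Sum.inl i) * X (Sum.inr i)) ^ d (Sum.inl i) := by
    rw [monomial_eq, Finsupp.prod_fintype _ _ (fun _ => pow_zero _), Fintype.prod_sum_type]
    simp only [hd0, mul_pow, Finset.prod_mul_distrib]
  rw [hmon]
  exact mul_mem (Subalgebra.algebraMap_mem _ _)
    (prod_mem fun i _ => pow_mem (Algebra.subset_adjoin (Set.mem_range_self i)) _)

end TorusWeight

namespace Quadric

variable {K : Type} [Field K] {n}

def coordEval : MvPolynomial (Fin n ⊕ Fin n) K →ₐ[K] (Quadric K n → K) :=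
  aeval fun s v => v.1 s

theorem coordEval_apply (P : MvPolynomial (Fin n ⊕ Fin n) K) (v : Quadric K n) :
    coordEval P v = eval v.1 P :=
  MvPolynomial.aeval_apply_eq_eval _ P v

theorem regularFnsZ_eq_range_coordEval : regularFnsZ K n = (coordEval (K := K) (n := n)).range :=
  Algebra.adjoin_range_eq_range_aeval _ _

def z (i : Fin n) : Quadric K n → K := fun v => v.1 (Sum.inl i) * v.1 (Sum.inr i)

theorem coordEval_X_mul_X (i : Fin n) :
    coordEval (X (Sum.inl i) * X (Sum.inr i)) = z (K := K) i := by
  ext v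
  simp [coordEval, z]

@[simp]
theorem torusActZ_inl (t : Fin n → Kˣ) (v : Quadric K n) (i : Fin n) :
    (torusActZ K n t v).1 (Sum.inl i) = t i * v.1 (Sum.inl i) := rfl

@[simp]
theorem torusActZ_inr (t : Fin n → Kˣ) (v : Quadric K n) (i : Fin n) :
    (torusActZ K n t v).1 (Sum.inr i) = (t i)⁻¹ * v.1 (Sum.inr i) := by
  simp [torusActZ]

theorem z_torusActZ (i : Fin n) (t : Fin n → Kˣ) (v : Quadric K n) :
    z i (torusActZ K n t v) = z i v := by
  rw [z, z, torusActZ_inl, torusActZ_inr, mul_mul_mul_comm, Units.mul_inv, one_mul]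

theorem eval_torusActZ_monomial (t : Fin n → Kˣ) (v : Quadric K n) (d : Fin n ⊕ Fin n →₀ ℕ)
    (c : K) :
    eval (torusActZ K n t v).1 (monomial d c) =
      torusCharacter (Finsupp.weight torusWeight d) t * eval v.1 (monomial d c) := by
  simp only [eval_monomial, Finsupp.prod_fintype _ _ (fun _ => pow_zero _),
    Fintype.prod_sum_type, weight_torusWeight, torusCharacter, MonoidHom.coe_mk, OneHom.coe_mk,
    torusActZ_inl, torusActZ_inr, mul_pow, Finset.prod_mul_distrib,
    Units.val_zpow_eq_zpow_val, zpow_sub₀ (Units.ne_zero _), zpow_natCast, div_eq_mul_inv,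
    Units.val_inv_eq_inv_val, inv_pow, Finset.prod_inv_distrib]
  ring

theorem eval_torusActZ_of_isWeightedHomogeneous {P : MvPolynomial (Fin n ⊕ Fin n) K}
    {w : Fin n → ℤ} (hP : P.IsWeightedHomogeneous torusWeight w) (t : Fin n → Kˣ)
    (v : Quadric K n) :
    eval (torusActZ K n t v).1 P = torusCharacter w t * eval v.1 P := by
  rw [P.as_sum, map_sum, map_sum, Finset.mul_sum]
  refine Finset.sum_congr rfl fun d hd => ?_
  rw [eval_torusActZ_monomial, hP (mem_support_iff.1 hd)]

theorem eval_eq_eval_weightedHomogeneousComponent_zero [CharZero K]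
    (P : MvPolynomial (Fin n ⊕ Fin n) K) (v : Quadric K n)
    (hP : ∀ t, eval (torusActZ K n t v).1 P = eval v.1 P) :
    eval v.1 P = eval v.1 (weightedHomogeneousComponent torusWeight 0 P) := by
  classical
  let W := insert 0 (P.support.image (Finsupp.weight torusWeight))
  have hW : ∀ d ∈ P.support, Finsupp.weight torusWeight d ∈ W :=
    fun d hd => Finset.mem_insert_of_mem (Finset.mem_image_of_mem _ hd)
  have h0W : (0 : Fin n → ℤ) ∈ W := Finset.mem_insert_self _ _
  let c : (Fin n → ℤ) → K := fun w =>
    eval v.1 (weightedHomogeneousComponent torusWeight w P) - if w = 0 then eval v.1 P else 0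
  have hc : ∑ w ∈ W, c w • ⇑(torusCharacter w : (Fin n → Kˣ) →* K) = 0 := by
    funext t
    have hsplit : eval (torusActZ K n t v).1 P = ∑ w ∈ W,
        eval v.1 (weightedHomogeneousComponent torusWeight w P) * torusCharacter w t := by
      conv_lhs => rw [← sum_weightedHomogeneousComponent_of_subset torusWeight P hW]
      simp only [map_sum, eval_torusActZ_of_isWeightedHomogeneous
        (weightedHomogeneousComponent_isWeightedHomogeneous _ _), mul_comm]
    calc (∑ w ∈ W, c w • ⇑(torusCharacter w : (Fin n → Kˣ) →* K)) t
        = eval (torusActZ K n t v).1 P - eval v.1 P := by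
          simp [c, hsplit, sub_mul, Finset.sum_sub_distrib, ite_mul, h0W]
      _ = 0 := by rw [hP t, sub_self]
  have hc0 : c 0 = 0 := linearIndependent_iff'.1
    (linearIndependent_torusCharacter (K := K) (ι := Fin n)) W c hc 0 h0W
  simp only [c, ↓reduceIte, sub_eq_zero] at hc0
  exact hc0.symm

theorem adjoin_range_z_eq_map :
    Algebra.adjoin K (Set.range (z (K := K) (n := n)))
      = (Algebra.adjoin K (Set.range fun i => X (Sum.inl i) * X (Sum.inr i))).map coordEval := by
  rw [AlgHom.map_adjoin, ← Set.range_comp]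
  exact congrArg _ (congrArg _ (funext fun i => (coordEval_X_mul_X i).symm))

theorem regularFnsZ_inf_invFnsZ_eq_adjoin [CharZero K] :
    regularFnsZ K n ⊓ invFnsZ K n = Algebra.adjoin K (Set.range (z (K := K) (n := n))) := by
  apply le_antisymm
  · rintro φ ⟨hreg, hinv⟩
    rw [regularFnsZ_eq_range_coordEval] at hreg
    obtain ⟨P, rfl⟩ := (AlgHom.mem_range _).1 hreg
    have hP₀ : coordEval P = coordEval (weightedHomogeneousComponent torusWeight 0 P) := by
      funext v
      simp only [coordEval_apply]
      refine eval_eq_eval_weightedHomogeneousComponent_zero P v fun t => ?_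
      simpa only [coordEval_apply] using hinv t v
    rw [hP₀, adjoin_range_z_eq_map]
    exact Subalgebra.mem_map.2 ⟨_, mem_adjoin_of_isWeightedHomogeneous_torusWeight_zero
      (weightedHomogeneousComponent_isWeightedHomogeneous _ _), rfl⟩
  · refine Algebra.adjoin_le ?_
    rintro _ ⟨i, rfl⟩
    refine ⟨?_, fun t v => z_torusActZ i t v⟩
    exact mul_mem (Algebra.subset_adjoin ⟨Sum.inl i, rfl⟩)
      (Algebra.subset_adjoin ⟨Sum.inr i, rfl⟩)

section Affine

variable {m : ℕ}

theorem z_last (v : Quadric K (m + 1)) :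
    z (Fin.last m) v = 1 - ∑ j : Fin m, z j.castSucc v := by
  have h : ∑ i, z i v = 1 := v.2
  rw [Fin.sum_univ_castSucc] at h
  exact eq_sub_of_add_eq' h

theorem adjoin_range_z_eq_range_aeval :
    Algebra.adjoin K (Set.range (z (K := K) (n := m + 1)))
      = (aeval fun j : Fin m => z (K := K) j.castSucc).range := by
  rw [← Algebra.adjoin_range_eq_range_aeval]
  refine le_antisymm (Algebra.adjoin_le ?_)
    (Algebra.adjoin_mono (Set.range_comp_subset_range Fin.castSucc z))
  rintro _ ⟨i, rfl⟩
  induction i using Fin.lastCases with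
  | last =>
    rw [show z (Fin.last m) = 1 - ∑ j : Fin m, z (K := K) j.castSucc from funext fun v => by
      simp [z_last]]
    exact sub_mem (one_mem _) (sum_mem fun j _ => Algebra.subset_adjoin ⟨j, rfl⟩)
  | cast j => exact Algebra.subset_adjoin ⟨j, rfl⟩

def ofZCoords (c : Fin m → K) : Quadric K (m + 1) :=
  ⟨Sum.elim (Fin.snoc (α := fun _ => K) c (1 - ∑ j, c j)) 1, by
    simp [Quadric, Fin.sum_univ_castSucc]⟩

theorem z_castSucc_ofZCoords (c : Fin m → K) (j : Fin m) : z j.castSucc (ofZCoords c) = c j := by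
  simp [z, ofZCoords]

theorem aeval_z_injective [Infinite K] :
    Function.Injective (aeval (R := K) fun j : Fin m => z (K := K) j.castSucc) := by
  refine (injective_iff_map_eq_zero _).2 fun Q hQ => MvPolynomial.funext fun c => ?_
  have h := congrFun hQ (ofZCoords c)
  rw [MvPolynomial.aeval_apply_eq_eval] at h
  simpa [z_castSucc_ofZCoords] using h

end Affine

end Quadric

/-- the categorical quotient `Z ⫽ T` of the quadric
`{x₁x′₁ + ⋯ + xₙx′ₙ = 1}` by the torus `T = (kˣ)ⁿ`, i.e. the algebra of `T`-invariant
regular functions on `Z`, is (the algebra of functions on) an affine space `𝔸^{n−1}`: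
it is isomorphic to a polynomial algebra in `n − 1` variables. -/
theorem stmt12 (hn : 1 ≤ n) :
    Nonempty ((regularFnsZ k n ⊓ invFnsZ k n : Subalgebra k (Quadric k n → k))
      ≃ₐ[k] MvPolynomial (Fin (n - 1)) k) := by
  obtain ⟨m, rfl⟩ := Nat.exists_eq_add_of_le' hn
  rw [Nat.add_sub_cancel, Quadric.regularFnsZ_inf_invFnsZ_eq_adjoin,
    Quadric.adjoin_range_z_eq_range_aeval]
  exact ⟨(AlgEquiv.ofInjective _ Quadric.aeval_z_injective).symm⟩
end

section
/- Let T be a rank-2 lattice with basis ε₁, ε₂ and consider the multiset of weights {ε₁+ε₂, −ε₁−ε₂, 2ε₁, −2ε₁, 2ε₂, −2ε₂}. The semigroup of nonnegative integer relations among these weights is not free: any minimal generating set must contain the five relations corresponding to the monomials X_{ε₁+ε₂}X_{−ε₁−ε₂}, X_{2ε₁}X_{−2ε₁}, X_{2ε₂}X_{−2ε₂}, X_{ε₁+ε₂}²X_{−2ε₁}X_{−2ε₂}, X_{−ε₁−ε₂}²X_{2ε₁}X_{2ε₂}, which exceeds the rank 6 − 2 = 4 of the relation lattice. -/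
def relSemigroup {M : Type*} [AddCommGroup M] {n : ℕ} (w : Fin n → M) :
    AddSubmonoid (Fin n → ℕ) where
  carrier := {a | ∑ i, (a i : ℤ) • w i = 0}
  add_mem' := by
    intro a b ha hb
    simp only [Set.mem_setOf_eq] at *
    have : ∀ i ∈ Finset.univ, (((a + b) i : ℕ) : ℤ) • w i
        = (a i : ℤ) • w i + (b i : ℤ) • w i := by
      intro i _
      have : (((a + b) i : ℕ) : ℤ) = (a i : ℤ) + (b i : ℤ) := by simp [Pi.add_apply]
      rw [this, add_smul]
    rw [Finset.sum_congr rfl this, Finset.sum_add_distrib, ha, hb, add_zero]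
  zero_mem' := by simp

def IsFreeRelMonoid {n : ℕ} (A : AddSubmonoid (Fin n → ℕ)) : Prop :=
  ∃ r : ℕ, Nonempty (A ≃+ (Fin r → ℕ))

def IsIrreducibleIn {n : ℕ} (A : AddSubmonoid (Fin n → ℕ)) (a : Fin n → ℕ) : Prop :=
  a ∈ A ∧ a ≠ 0 ∧ ∀ b c : Fin n → ℕ, b ∈ A → c ∈ A → b + c = a → b = 0 ∨ c = 0

namespace Stmt14Aux

def W : Fin 6 → (Fin 2 → ℤ) := ![![1, 1], ![-1, -1], ![2, 0], ![-2, 0], ![0, 2], ![0, -2]]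

lemma mem_iff (a : Fin 6 → ℕ) : a ∈ relSemigroup W ↔
    ((a 0 : ℤ) - a 1 + 2 * a 2 - 2 * a 3 = 0 ∧ (a 0 : ℤ) - a 1 + 2 * a 4 - 2 * a 5 = 0) := by
  have key : ∀ j : Fin 2, (∑ i, (a i : ℤ) • W i) j
      = (a 0 : ℤ) * W 0 j + a 1 * W 1 j + a 2 * W 2 j + a 3 * W 3 j + a 4 * W 4 j + a 5 * W 5 j := by
    intro j
    rw [Fin.sum_univ_six]
    simp [Pi.add_apply, Pi.smul_apply, smul_eq_mul]
  constructor
  · intro h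
    have h0 := congrFun (h : ∑ i, (a i : ℤ) • W i = 0) 0
    have h1 := congrFun (h : ∑ i, (a i : ℤ) • W i = 0) 1
    rw [key] at h0 h1
    rw [show W 0 0 = 1 from rfl, show W 1 0 = -1 from rfl, show W 2 0 = 2 from rfl,
        show W 3 0 = -2 from rfl, show W 4 0 = 0 from rfl, show W 5 0 = 0 from rfl] at h0
    rw [show W 0 1 = 1 from rfl, show W 1 1 = -1 from rfl, show W 2 1 = 0 from rfl,
        show W 3 1 = 0 from rfl, show W 4 1 = 2 from rfl, show W 5 1 = -2 from rfl] at h1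
    simp only [Pi.zero_apply] at h0 h1
    constructor <;> linarith
  · rintro ⟨h1, h2⟩
    show ∑ i, (a i : ℤ) • W i = 0
    funext j
    rw [key]
    fin_cases j
    · show (a 0 : ℤ) * W 0 0 + a 1 * W 1 0 + a 2 * W 2 0 + a 3 * W 3 0 + a 4 * W 4 0 + a 5 * W 5 0 = (0 : Fin 2 → ℤ) 0
      rw [show W 0 0 = 1 from rfl, show W 1 0 = -1 from rfl, show W 2 0 = 2 from rfl,
        show W 3 0 = -2 from rfl, show W 4 0 = 0 from rfl, show W 5 0 = 0 from rfl]
      simp only [Pi.zero_apply]; linarith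
    · show (a 0 : ℤ) * W 0 1 + a 1 * W 1 1 + a 2 * W 2 1 + a 3 * W 3 1 + a 4 * W 4 1 + a 5 * W 5 1 = (0 : Fin 2 → ℤ) 1
      rw [show W 0 1 = 1 from rfl, show W 1 1 = -1 from rfl, show W 2 1 = 0 from rfl,
        show W 3 1 = 0 from rfl, show W 4 1 = 2 from rfl, show W 5 1 = -2 from rfl]
      simp only [Pi.zero_apply]; linarith

def U : Fin 6 → (Fin 6 → ℕ) := fun i => Pi.single i 1
def T1 : Fin 6 → ℕ := U 0 + U 1
def T2 : Fin 6 → ℕ := U 2 + U 3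
def T3 : Fin 6 → ℕ := U 4 + U 5
def T4 : Fin 6 → ℕ := U 0 + U 0 + U 3 + U 5
def T5 : Fin 6 → ℕ := U 1 + U 1 + U 2 + U 4

lemma eq_zero_of_comps {b : Fin 6 → ℕ} (h0 : b 0 = 0) (h1 : b 1 = 0) (h2 : b 2 = 0)
    (h3 : b 3 = 0) (h4 : b 4 = 0) (h5 : b 5 = 0) : b = 0 := by
  funext i; fin_cases i <;> assumption

lemma irr_aux (t : Fin 6 → ℕ) (ht : t ∈ relSemigroup W) (htne : t ≠ 0)
    (H : ∀ b c : Fin 6 → ℕ,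
      ((b 0 : ℤ) - b 1 + 2 * b 2 - 2 * b 3 = 0) → ((b 0 : ℤ) - b 1 + 2 * b 4 - 2 * b 5 = 0) →
      ((c 0 : ℤ) - c 1 + 2 * c 2 - 2 * c 3 = 0) → ((c 0 : ℤ) - c 1 + 2 * c 4 - 2 * c 5 = 0) →
      (∀ i, b i + c i = t i) →
      (b 0 = 0 ∧ b 1 = 0 ∧ b 2 = 0 ∧ b 3 = 0 ∧ b 4 = 0 ∧ b 5 = 0) ∨
      (c 0 = 0 ∧ c 1 = 0 ∧ c 2 = 0 ∧ c 3 = 0 ∧ c 4 = 0 ∧ c 5 = 0)) :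
    IsIrreducibleIn (relSemigroup W) t := by
  refine ⟨ht, htne, ?_⟩
  intro b c hb hc hbc
  rw [mem_iff] at hb hc
  have hsum : ∀ i, b i + c i = t i := fun i => congrFun hbc i
  rcases H b c hb.1 hb.2 hc.1 hc.2 hsum with ⟨h0,h1,h2,h3,h4,h5⟩ | ⟨h0,h1,h2,h3,h4,h5⟩
  · exact Or.inl (eq_zero_of_comps h0 h1 h2 h3 h4 h5)
  · exact Or.inr (eq_zero_of_comps h0 h1 h2 h3 h4 h5)

lemma memT1 : T1 ∈ relSemigroup W := by
  rw [mem_iff, show T1 0 = 1 from rfl, show T1 1 = 1 from rfl, show T1 2 = 0 from rfl, show T1 3 = 0 from rfl, show T1 4 = 0 from rfl, show T1 5 = 0 from rfl]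
  norm_num
lemma memT2 : T2 ∈ relSemigroup W := by
  rw [mem_iff, show T2 0 = 0 from rfl, show T2 1 = 0 from rfl, show T2 2 = 1 from rfl, show T2 3 = 1 from rfl, show T2 4 = 0 from rfl, show T2 5 = 0 from rfl]
  norm_num
lemma memT3 : T3 ∈ relSemigroup W := by
  rw [mem_iff, show T3 0 = 0 from rfl, show T3 1 = 0 from rfl, show T3 2 = 0 from rfl, show T3 3 = 0 from rfl, show T3 4 = 1 from rfl, show T3 5 = 1 from rfl]
  norm_num
lemma memT4 : T4 ∈ relSemigroup W := by
  rw [mem_iff, show T4 0 = 2 from rfl, show T4 1 = 0 from rfl, show T4 2 = 0 from rfl, show T4 3 = 1 from rfl, show T4 4 = 0 from rfl, show T4 5 = 1 from rfl]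
  norm_num
lemma memT5 : T5 ∈ relSemigroup W := by
  rw [mem_iff, show T5 0 = 0 from rfl, show T5 1 = 2 from rfl, show T5 2 = 1 from rfl, show T5 3 = 0 from rfl, show T5 4 = 1 from rfl, show T5 5 = 0 from rfl]
  norm_num

lemma irr1 : IsIrreducibleIn (relSemigroup W) T1 := by
  refine irr_aux _ memT1 (by decide) ?_
  intro b c e1 e2 e3 e4 hs
  have s0 := hs 0; have s1 := hs 1; have s2 := hs 2; have s3 := hs 3
  have s4 := hs 4; have s5 := hs 5
  rw [show T1 0 = 1 from rfl] at s0; rw [show T1 1 = 1 from rfl] at s1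
  rw [show T1 2 = 0 from rfl] at s2; rw [show T1 3 = 0 from rfl] at s3
  rw [show T1 4 = 0 from rfl] at s4; rw [show T1 5 = 0 from rfl] at s5
  omega

lemma irr2 : IsIrreducibleIn (relSemigroup W) T2 := by
  refine irr_aux _ memT2 (by decide) ?_
  intro b c e1 e2 e3 e4 hs
  have s0 := hs 0; have s1 := hs 1; have s2 := hs 2; have s3 := hs 3
  have s4 := hs 4; have s5 := hs 5
  rw [show T2 0 = 0 from rfl] at s0; rw [show T2 1 = 0 from rfl] at s1
  rw [show T2 2 = 1 from rfl] at s2; rw [show T2 3 = 1 from rfl] at s3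
  rw [show T2 4 = 0 from rfl] at s4; rw [show T2 5 = 0 from rfl] at s5
  omega

lemma irr3 : IsIrreducibleIn (relSemigroup W) T3 := by
  refine irr_aux _ memT3 (by decide) ?_
  intro b c e1 e2 e3 e4 hs
  have s0 := hs 0; have s1 := hs 1; have s2 := hs 2; have s3 := hs 3
  have s4 := hs 4; have s5 := hs 5
  rw [show T3 0 = 0 from rfl] at s0; rw [show T3 1 = 0 from rfl] at s1
  rw [show T3 2 = 0 from rfl] at s2; rw [show T3 3 = 0 from rfl] at s3
  rw [show T3 4 = 1 from rfl] at s4; rw [show T3 5 = 1 from rfl] at s5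
  omega

lemma irr4 : IsIrreducibleIn (relSemigroup W) T4 := by
  refine irr_aux _ memT4 (by decide) ?_
  intro b c e1 e2 e3 e4 hs
  have s0 := hs 0; have s1 := hs 1; have s2 := hs 2; have s3 := hs 3
  have s4 := hs 4; have s5 := hs 5
  rw [show T4 0 = 2 from rfl] at s0; rw [show T4 1 = 0 from rfl] at s1
  rw [show T4 2 = 0 from rfl] at s2; rw [show T4 3 = 1 from rfl] at s3
  rw [show T4 4 = 0 from rfl] at s4; rw [show T4 5 = 1 from rfl] at s5
  omega

lemma irr5 : IsIrreducibleIn (relSemigroup W) T5 := by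
  refine irr_aux _ memT5 (by decide) ?_
  intro b c e1 e2 e3 e4 hs
  have s0 := hs 0; have s1 := hs 1; have s2 := hs 2; have s3 := hs 3
  have s4 := hs 4; have s5 := hs 5
  rw [show T5 0 = 0 from rfl] at s0; rw [show T5 1 = 2 from rfl] at s1
  rw [show T5 2 = 1 from rfl] at s2; rw [show T5 3 = 0 from rfl] at s3
  rw [show T5 4 = 1 from rfl] at s4; rw [show T5 5 = 0 from rfl] at s5
  omega

/-- In the free monoid `Fin r → ℕ`, an element with only trivial decompositions
is a unit vector. -/
lemma free_irr {r : ℕ} (x : Fin r → ℕ) (hx : x ≠ 0)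
    (hirr : ∀ p q : Fin r → ℕ, p + q = x → p = 0 ∨ q = 0) :
    ∃ j, x = Pi.single j 1 := by
  obtain ⟨j, hj⟩ : ∃ j, x j ≠ 0 := by
    by_contra h
    push_neg at h
    exact hx (funext fun i => h i)
  refine ⟨j, ?_⟩
  set p : Fin r → ℕ := Pi.single j 1 with hp
  set q : Fin r → ℕ := fun i => x i - p i with hq
  have hple : ∀ i, p i ≤ x i := by
    intro i
    by_cases hij : i = j
    · subst hij; simp [hp, Pi.single_eq_same]; omega
    · simp [hp, Pi.single_eq_of_ne hij]
  have hpq : p + q = x := by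
    funext i
    have := hple i
    simp only [Pi.add_apply, hq]
    omega
  rcases hirr p q hpq with h | h
  · exfalso
    have := congrFun h j
    simp [hp, Pi.single_eq_same] at this
  · have : x = p := by
      funext i
      have h1 := congrFun h i
      have h2 := hple i
      simp only [hq, Pi.zero_apply] at h1
      omega
    rw [this, hp]

set_option synthInstance.maxHeartbeats 1000000 in
lemma not_free : ¬ IsFreeRelMonoid (relSemigroup W) := by
  rintro ⟨r, ⟨φ⟩⟩
  set A := relSemigroup W
  let a1 : A := ⟨T1, memT1⟩
  let a2 : A := ⟨T2, memT2⟩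
  let a3 : A := ⟨T3, memT3⟩
  let a4 : A := ⟨T4, memT4⟩
  let a5 : A := ⟨T5, memT5⟩
  -- each φ aᵢ is a unit vector
  have key : ∀ (a : A), IsIrreducibleIn A a.1 → ∃ j, φ a = Pi.single j 1 := by
    rintro a ⟨_, hne, hdec⟩
    apply free_irr
    · intro h
      have : a = 0 := by
        apply φ.injective
        rw [h, map_zero]
      exact hne (by rw [this]; rfl)
    · intro p q hpq
      have h1 : φ.symm p + φ.symm q = a := by
        rw [← map_add, hpq, AddEquiv.symm_apply_apply]
      have h2 : (φ.symm p : Fin 6 → ℕ) + (φ.symm q : Fin 6 → ℕ) = a.1 := by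
        rw [← h1]; rfl
      rcases hdec _ _ (φ.symm p).2 (φ.symm q).2 h2 with h | h
      · left
        have : φ.symm p = 0 := Subtype.ext h
        rw [← φ.apply_symm_apply p, this, map_zero]
      · right
        have : φ.symm q = 0 := Subtype.ext h
        rw [← φ.apply_symm_apply q, this, map_zero]
  obtain ⟨j1, hj1⟩ := key a1 irr1
  obtain ⟨j2, hj2⟩ := key a2 irr2
  obtain ⟨j3, hj3⟩ := key a3 irr3
  obtain ⟨j4, hj4⟩ := key a4 irr4
  obtain ⟨j5, hj5⟩ := key a5 irr5
  -- distinctness of j1, j4, j5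
  have hdist : ∀ (a b : A) (ja jb : Fin r), φ a = Pi.single ja 1 → φ b = Pi.single jb 1 →
      a.1 ≠ b.1 → ja ≠ jb := by
    intro a b ja jb ha hb hne h
    subst h
    exact hne (congrArg Subtype.val (φ.injective (ha.trans hb.symm)))
  have h41 : j4 ≠ j1 := hdist a4 a1 j4 j1 hj4 hj1 (by decide)
  have h51 : j5 ≠ j1 := hdist a5 a1 j5 j1 hj5 hj1 (by decide)
  -- the relation T4 + T5 = T1 + T1 + T2 + T3
  have hrel : a4 + a5 = a1 + a1 + a2 + a3 := by
    apply Subtype.ext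
    show T4 + T5 = T1 + T1 + T2 + T3
    decide
  have hφ : φ a4 + φ a5 = φ a1 + φ a1 + φ a2 + φ a3 := by
    rw [← map_add, ← map_add, ← map_add, ← map_add, hrel]
  rw [hj1, hj2, hj3, hj4, hj5] at hφ
  have := congrFun hφ j1
  simp only [Pi.add_apply, Pi.single_eq_same, Pi.single_eq_of_ne (Ne.symm h41),
    Pi.single_eq_of_ne (Ne.symm h51)] at this
  omega

end Stmt14Aux

/-- for the weights `ε₁+ε₂, −ε₁−ε₂, 2ε₁, −2ε₁, 2ε₂, −2ε₂` in a rank-2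
lattice, the relation semigroup is not free: any minimal generating set must contain the
five listed relations, whose number exceeds the rank `6 − 2 = 4` of the relation lattice. -/
theorem stmt14 :
    let w : Fin 6 → (Fin 2 → ℤ) :=
      ![![1, 1], ![-1, -1], ![2, 0], ![-2, 0], ![0, 2], ![0, -2]]
    let A := relSemigroup w
    let u : Fin 6 → (Fin 6 → ℕ) := fun i => Pi.single i 1
    let t₁ := u 0 + u 1        -- X_{ε₁+ε₂} X_{−ε₁−ε₂}
    let t₂ := u 2 + u 3        -- X_{2ε₁} X_{−2ε₁}
    let t₃ := u 4 + u 5        -- X_{2ε₂} X_{−2ε₂}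
    let t₄ := u 0 + u 0 + u 3 + u 5  -- X_{ε₁+ε₂}² X_{−2ε₁} X_{−2ε₂}
    let t₅ := u 1 + u 1 + u 2 + u 4  -- X_{−ε₁−ε₂}² X_{2ε₁} X_{2ε₂}
    (∀ t ∈ ({t₁, t₂, t₃, t₄, t₅} : Set (Fin 6 → ℕ)), IsIrreducibleIn A t) ∧
    4 < ({t₁, t₂, t₃, t₄, t₅} : Finset (Fin 6 → ℕ)).card ∧
    ¬ IsFreeRelMonoid A := by
  intro w A u t₁ t₂ t₃ t₄ t₅
  refine ⟨?_, ?_, Stmt14Aux.not_free⟩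
  · rintro t (rfl | rfl | rfl | rfl | rfl)
    · exact Stmt14Aux.irr1
    · exact Stmt14Aux.irr2
    · exact Stmt14Aux.irr3
    · exact Stmt14Aux.irr4
    · exact Stmt14Aux.irr5
  · show 4 < ({Stmt14Aux.T1, Stmt14Aux.T2, Stmt14Aux.T3, Stmt14Aux.T4, Stmt14Aux.T5} :
      Finset (Fin 6 → ℕ)).card
    decide
end

section
/- Let T be a rank-2 lattice with basis e₁, e₂ and set e₃ = −e₁−e₂. Consider the weights {e₁+e₂, e₁+e₃, e₂+e₃, −e₁−e₂, −e₁−e₃, −e₂−e₃}. The semigroup of nonnegative integer relations among these weights is not free: a minimal generating set must contain the three relations X_{eᵢ+eⱼ}X_{−eᵢ−eⱼ} (i<j) together with X_{e₁+e₂}X_{e₁+e₃}X_{e₂+e₃} and X_{−e₁−e₂}X_{−e₁−e₃}X_{−e₂−e₃}, giving at least 5 generators while the relation lattice has rank 4. -/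
theorem mem_relSemigroup {M : Type*} [AddCommGroup M] {n : ℕ} {w : Fin n → M}
    {a : Fin n → ℕ} : a ∈ relSemigroup w ↔ ∑ i, (a i : ℤ) • w i = 0 :=
  Iff.rfl

theorem AddSubmonoid.eq_zero_of_isAddUnit {n : ℕ} {A : AddSubmonoid (Fin n → ℕ)} {x : A}
    (hx : IsAddUnit x) : x = 0 :=
  Subtype.ext (isAddUnit_iff_eq_zero.1 (hx.map A.subtype))

theorem IsIrreducibleIn.addIrreducible {n : ℕ} {A : AddSubmonoid (Fin n → ℕ)}
    {a : Fin n → ℕ} (h : IsIrreducibleIn A a) : AddIrreducible (⟨a, h.1⟩ : A) where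
  not_isAddUnit hu := h.2.1 (congrArg Subtype.val (AddSubmonoid.eq_zero_of_isAddUnit hu))
  isAddUnit_or_isAddUnit b c hbc := by
    have of_val_eq_zero (x : A) (hx : (x : Fin n → ℕ) = 0) : IsAddUnit x :=
      (Subtype.ext hx : x = 0) ▸ isAddUnit_zero
    exact (h.2.2 b c b.2 c.2 (congrArg Subtype.val hbc).symm).imp (of_val_eq_zero b)
      (of_val_eq_zero c)

theorem sum_eq_one_of_addIrreducible {ι : Type*} [Fintype ι] [DecidableEq ι] {x : ι → ℕ}
    (hx : AddIrreducible x) : ∑ i, x i = 1 := by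
  obtain ⟨j, hj⟩ : ∃ j, x j ≠ 0 := by
    by_contra! h
    exact hx.not_isAddUnit (isAddUnit_iff_eq_zero.2 (funext h))
  have hsplit : x = Pi.single j 1 + (x - Pi.single j 1) := by
    ext i
    rcases eq_or_ne i j with rfl | hij
    · simp only [Pi.add_apply, Pi.sub_apply, Pi.single_eq_same]
      omega
    · simp [Pi.single_eq_of_ne hij]
  rcases hx.isAddUnit_or_isAddUnit hsplit with hu | hu
  · simp [isAddUnit_iff_eq_zero] at hu
  · rw [hsplit, isAddUnit_iff_eq_zero.1 hu, add_zero]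
    simp

theorem exists_eq_single_of_sum_eq_one {ι : Type*} [Fintype ι] [DecidableEq ι] {a : ι → ℕ}
    (h : ∑ i, a i = 1) : ∃ j, a = Pi.single j 1 := by
  obtain ⟨j, hj⟩ := (Finsupp.sum_eq_one_iff (Finsupp.equivFunOnFinite.symm a)).1 <| by
    simpa [Finsupp.sum_fintype] using h
  refine ⟨j, ?_⟩
  rw [← Finsupp.equivFunOnFinite_single, ← hj, Equiv.apply_symm_apply]

theorem IsFreeRelMonoid.exists_length {n : ℕ} {A : AddSubmonoid (Fin n → ℕ)}
    (hA : IsFreeRelMonoid A) :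
    ∃ ℓ : A →+ ℕ, ∀ a (h : IsIrreducibleIn A a), ℓ ⟨a, h.1⟩ = 1 := by
  obtain ⟨r, ⟨φ⟩⟩ := hA
  let total : (Fin r → ℕ) →+ ℕ := ∑ i, Pi.evalAddMonoidHom (fun _ => ℕ) i
  refine ⟨total.comp φ.toAddMonoidHom, fun a h => ?_⟩
  simpa [total] using sum_eq_one_of_addIrreducible (h.addIrreducible.map φ)

theorem not_isFreeRelMonoid_of_add_eq {n : ℕ} {A : AddSubmonoid (Fin n → ℕ)}
    {a₁ a₂ a₃ b₁ b₂ : Fin n → ℕ} (ha₁ : IsIrreducibleIn A a₁) (ha₂ : IsIrreducibleIn A a₂)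
    (ha₃ : IsIrreducibleIn A a₃) (hb₁ : IsIrreducibleIn A b₁) (hb₂ : IsIrreducibleIn A b₂)
    (h : a₁ + a₂ + a₃ = b₁ + b₂) : ¬ IsFreeRelMonoid A := by
  intro hA
  obtain ⟨ℓ, hℓ⟩ := hA.exists_length
  have hsum : (⟨a₁, ha₁.1⟩ + ⟨a₂, ha₂.1⟩ + ⟨a₃, ha₃.1⟩ : A) = ⟨b₁, hb₁.1⟩ + ⟨b₂, hb₂.1⟩ :=
    Subtype.ext h
  have hlen := congrArg ℓ hsum
  simp only [map_add, hℓ _ ha₁, hℓ _ ha₂, hℓ _ ha₃, hℓ _ hb₁, hℓ _ hb₂] at hlen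
  omega

section NonzeroWeights

variable {M : Type*} [AddCommGroup M] {n : ℕ} {w : Fin n → M}

theorem two_le_sum_of_mem_relSemigroup (hw : ∀ i, w i ≠ 0) {a : Fin n → ℕ}
    (ha : a ∈ relSemigroup w) (h0 : a ≠ 0) : 2 ≤ ∑ i, a i := by
  have hpos : ∑ i, a i ≠ 0 := by
    simpa [Finset.sum_eq_zero_iff, funext_iff] using h0
  by_contra! hlt
  obtain ⟨j, rfl⟩ := exists_eq_single_of_sum_eq_one (by omega : ∑ i, a i = 1)
  apply hw j
  simpa [mem_relSemigroup, Pi.single_apply] using ha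

theorem isIrreducibleIn_of_sum_le_three (hw : ∀ i, w i ≠ 0) {a : Fin n → ℕ}
    (ha : a ∈ relSemigroup w) (h0 : a ≠ 0) (h3 : ∑ i, a i ≤ 3) :
    IsIrreducibleIn (relSemigroup w) a := by
  refine ⟨ha, h0, fun b c hb hc hbc => ?_⟩
  by_contra! hne
  have hb2 := two_le_sum_of_mem_relSemigroup hw hb hne.1
  have hc2 := two_le_sum_of_mem_relSemigroup hw hc hne.2
  rw [← hbc] at h3
  simp only [Pi.add_apply, Finset.sum_add_distrib] at h3
  omega

end NonzeroWeights

/-- for the weights `e₁+e₂, e₁+e₃, e₂+e₃` and their negatives, where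
`e₃ = −e₁−e₂` in a rank-2 lattice, the relation semigroup is not free: a minimal
generating set must contain the three pairing relations together with the two triple
relations, giving at least 5 generators while the relation lattice has rank 4. -/
theorem stmt15 :
    let w : Fin 6 → (Fin 2 → ℤ) :=
      ![![1, 1], ![0, -1], ![-1, 0], ![-1, -1], ![0, 1], ![1, 0]]
      -- e₁+e₂, e₁+e₃, e₂+e₃, −(e₁+e₂), −(e₁+e₃), −(e₂+e₃), with e₃ = −e₁−e₂
    let A := relSemigroup w
    let u : Fin 6 → (Fin 6 → ℕ) := fun i => Pi.single i 1
    let t₁ := u 0 + u 3        -- X_{e₁+e₂} X_{−e₁−e₂}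
    let t₂ := u 1 + u 4        -- X_{e₁+e₃} X_{−e₁−e₃}
    let t₃ := u 2 + u 5        -- X_{e₂+e₃} X_{−e₂−e₃}
    let t₄ := u 0 + u 1 + u 2  -- X_{e₁+e₂} X_{e₁+e₃} X_{e₂+e₃}
    let t₅ := u 3 + u 4 + u 5  -- X_{−e₁−e₂} X_{−e₁−e₃} X_{−e₂−e₃}
    (∀ t ∈ ({t₁, t₂, t₃, t₄, t₅} : Set (Fin 6 → ℕ)), IsIrreducibleIn A t) ∧
    4 < ({t₁, t₂, t₃, t₄, t₅} : Finset (Fin 6 → ℕ)).card ∧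
    ¬ IsFreeRelMonoid A := by
  intro w A u t₁ t₂ t₃ t₄ t₅
  have hw : ∀ i, w i ≠ 0 := by decide
  have hirr : ∀ t ∈ ({t₁, t₂, t₃, t₄, t₅} : Set (Fin 6 → ℕ)), IsIrreducibleIn A t := by
    rintro t (rfl | rfl | rfl | rfl | rfl) <;>
      exact isIrreducibleIn_of_sum_le_three hw (mem_relSemigroup.2 (by decide)) (by decide)
        (by decide)
  refine ⟨hirr, by decide, not_isFreeRelMonoid_of_add_eq (hirr t₁ (by simp))
    (hirr t₂ (by simp)) (hirr t₃ (by simp)) (hirr t₄ (by simp)) (hirr t₅ (by simp)) ?_⟩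
  simp only [t₁, t₂, t₃, t₄, t₅]
  abel
end

section
/- Let T₂ be the diagonal torus of SL₂(k) acting on SL₂(k) on both sides: (s,t)·X = sXt⁻¹. Then the algebra of invariant regular functions on SL₂ is a polynomial algebra in one variable, generated by the product X₁₁X₂₂ of the diagonal entries (equivalently X₁₂X₂₁ = X₁₁X₂₂ − 1), so the double coset variety T₂∖SL₂/T₂ is the affine line 𝔸¹. -/
variable (k : Type) [Field k] [CharZero k] [IsAlgClosed k]

/-- A matrix in `SL₂` is diagonal (the diagonal torus `T₂ = {diag(t, t⁻¹)}`). -/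
def IsDiag (t : Matrix.SpecialLinearGroup (Fin 2) k) : Prop :=
  ∀ i j : Fin 2, i ≠ j → t.1 i j = 0

/-- Regular functions on `SL₂`: the subalgebra of functions generated by the matrix
coordinates. -/
def regularSL2 : Subalgebra k (Matrix.SpecialLinearGroup (Fin 2) k → k) :=
  Algebra.adjoin k (Set.range fun p : Fin 2 × Fin 2 =>
    fun X : Matrix.SpecialLinearGroup (Fin 2) k => X.1 p.1 p.2)

/-- Functions invariant under the two-sided torus action `(s,t)·X = sXt⁻¹`. -/
def invSL2 : Subalgebra k (Matrix.SpecialLinearGroup (Fin 2) k → k) where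
  carrier := {φ | ∀ s t : Matrix.SpecialLinearGroup (Fin 2) k, IsDiag k s → IsDiag k t →
    ∀ X, φ (s * X * t⁻¹) = φ X}
  mul_mem' := by
    intro a b ha hb s t hs ht X
    simp [Pi.mul_apply, ha s t hs ht X, hb s t hs ht X]
  add_mem' := by
    intro a b ha hb s t hs ht X
    simp [Pi.add_apply, ha s t hs ht X, hb s t hs ht X]
  algebraMap_mem' := by intro c s t hs ht X; rfl

/-!
If `g₀₁g₁₁ ≠ 0`, then choosing `ν² = g₀₁g₁₁`, the torus element `(diag(ν/g₀₁), diag(ν⁻¹))` moves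
`g` to the slice matrix `[[α, 1], [α - 1, 1]]` with `α = g₀₀g₁₁`. Hence an invariant function `φ`
equals `q(g₀₀g₁₁)` on that open set, where `q(α) = φ [[α, 1], [α - 1, 1]]` is a polynomial when `φ`
is regular. For arbitrary `g`, both `φ` and `q(g₀₀g₁₁)` are polynomial along the line
`μ ↦ g [[1, μ], [0, 1]]` and agree off the finitely many `μ` where an entry of the second column
vanishes, so they agree at `μ = 0`. Finally `g₀₀g₁₁` is transcendental because it takes every value
on the slice.
-/

open Polynomial
open scoped MatrixGroups

theorem Polynomial.C_mul_X_add_C_ne_zero {R : Type*} [Semiring R] {a b : R}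
    (h : a ≠ 0 ∨ b ≠ 0) : C a * X + C b ≠ 0 := by
  contrapose! h
  exact ⟨by simpa using congrArg (coeff · 1) h, by simpa using congrArg (coeff · 0) h⟩

theorem Polynomial.eq_of_eval_eq_of_eval_ne_zero {R : Type*} [CommRing R] [IsDomain R]
    [Infinite R] {p q h : R[X]} (hh : h ≠ 0) (H : ∀ μ, h.eval μ ≠ 0 → p.eval μ = q.eval μ) :
    p = q := by
  have : h * (p - q) = 0 := Polynomial.funext fun μ => by
    by_cases hμ : h.eval μ = 0 <;> simp [hμ, H μ]
  exact sub_eq_zero.1 ((mul_eq_zero.1 this).resolve_left hh)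

theorem transcendental_of_surjective {R : Type*} [CommRing R] [IsDomain R] [Infinite R]
    {S : Type*} {f : S → R} (hf : Function.Surjective f) : Transcendental R f := by
  rintro ⟨p, hp0, hp⟩
  refine hp0 (Polynomial.funext fun r => ?_)
  obtain ⟨x, rfl⟩ := hf r
  simpa using congrFun hp x

section
variable {K : Type} [Field K]

theorem SL2_det_fin_two (g : SL(2, K)) : g 0 0 * g 1 1 - g 0 1 * g 1 0 = 1 := by
  rw [← Matrix.det_fin_two]
  exact g.det_coe

theorem SL2_row_ne_zero (g : SL(2, K)) (i : Fin 2) : g i 0 ≠ 0 ∨ g i 1 ≠ 0 := by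
  by_contra! h
  have hdet := SL2_det_fin_two g
  fin_cases i <;> simp_all

def diagSL2 : Kˣ →* SL(2, K) where
  toFun u := ⟨!![(u : K), 0; 0, ↑u⁻¹], by simp⟩
  map_one' := by ext i j; fin_cases i <;> fin_cases j <;> simp
  map_mul' u v := Subtype.ext <| by
    change !![((u * v : Kˣ) : K), 0; 0, ↑(u * v)⁻¹] =
      !![(u : K), 0; 0, ↑u⁻¹] * !![(v : K), 0; 0, ↑v⁻¹]
    simp [mul_comm]

@[simp]
theorem coe_diagSL2 (u : Kˣ) :
    (diagSL2 u : Matrix (Fin 2) (Fin 2) K) = !![(u : K), 0; 0, ↑u⁻¹] := rfl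

theorem isDiag_iff_exists_eq_diagSL2 {s : SL(2, K)} : IsDiag K s ↔ ∃ u, diagSL2 u = s := by
  constructor
  · intro hs
    have h := SL2_det_fin_two s
    rw [hs 0 1 (by decide), zero_mul, sub_zero] at h
    refine ⟨Units.mkOfMulEqOne _ _ h, ?_⟩
    ext i j
    fin_cases i <;> fin_cases j <;> simp [hs 0 1, hs 1 0, inv_eq_of_mul_eq_one_right h]
  · rintro ⟨u, rfl⟩ i j hij
    fin_cases i <;> fin_cases j <;> simp_all

theorem coe_diagSL2_mul_mul_diagSL2 (u v : Kˣ) (g : SL(2, K)) :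
    ((diagSL2 u * g * diagSL2 v : SL(2, K)) : Matrix (Fin 2) (Fin 2) K) =
      !![u * g 0 0 * v, u * g 0 1 * ↑v⁻¹; ↑u⁻¹ * g 1 0 * v, ↑u⁻¹ * g 1 1 * ↑v⁻¹] := by
  rw [Matrix.SpecialLinearGroup.coe_mul, Matrix.SpecialLinearGroup.coe_mul,
    Matrix.eta_fin_two (g : Matrix _ _ K)]
  simp

def sliceSL2 (α : K) : SL(2, K) := ⟨!![α, 1; α - 1, 1], by simp [Matrix.det_fin_two]⟩

@[simp]
theorem coe_sliceSL2 (α : K) :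
    (sliceSL2 α : Matrix (Fin 2) (Fin 2) K) = !![α, 1; α - 1, 1] := rfl

def upperUnipotentSL2 (μ : K) : SL(2, K) := ⟨!![1, μ; 0, 1], by simp⟩

theorem upperUnipotentSL2_zero : upperUnipotentSL2 (0 : K) = 1 := by
  ext i j
  fin_cases i <;> fin_cases j <;> simp [upperUnipotentSL2]

theorem coe_mul_upperUnipotentSL2 (g : SL(2, K)) (μ : K) :
    ((g * upperUnipotentSL2 μ : SL(2, K)) : Matrix (Fin 2) (Fin 2) K) =
      !![g 0 0, g 0 0 * μ + g 0 1; g 1 0, g 1 0 * μ + g 1 1] := by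
  rw [Matrix.SpecialLinearGroup.coe_mul, Matrix.eta_fin_two (g : Matrix _ _ K)]
  simp [upperUnipotentSL2]

theorem mul_diag_mem_regularSL2 : (fun g : SL(2, K) => g 0 0 * g 1 1) ∈ regularSL2 K :=
  mul_mem (Algebra.subset_adjoin ⟨(0, 0), rfl⟩) (Algebra.subset_adjoin ⟨(1, 1), rfl⟩)

theorem mul_diag_mem_invSL2 : (fun g : SL(2, K) => g 0 0 * g 1 1) ∈ invSL2 K := by
  intro s t hs ht g
  obtain ⟨u, rfl⟩ := isDiag_iff_exists_eq_diagSL2.1 hs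
  obtain ⟨v, rfl⟩ := isDiag_iff_exists_eq_diagSL2.1 ht
  rw [← map_inv]
  simp only [coe_diagSL2_mul_mul_diagSL2]
  simp
  field_simp

theorem exists_eval_eq_of_mem_regularSL2 {φ : SL(2, K) → K} (hφ : φ ∈ regularSL2 K)
    (γ : K → SL(2, K)) (E : Fin 2 → Fin 2 → K[X]) (hE : ∀ μ i j, γ μ i j = (E i j).eval μ) :
    ∃ p : K[X], ∀ μ, φ (γ μ) = p.eval μ := by
  rw [regularSL2, Algebra.adjoin_range_eq_range_aeval] at hφ
  obtain ⟨P, rfl⟩ := hφ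
  refine ⟨MvPolynomial.aeval (fun p => E p.1 p.2) P, fun μ => ?_⟩
  change MvPolynomial.aeval (fun p (g : SL(2, K)) => g.1 p.1 p.2) P (γ μ) = _
  have hγ := congrArg (· P) (MvPolynomial.comp_aeval (fun p (g : SL(2, K)) => g.1 p.1 p.2)
    (Pi.evalAlgHom K (fun _ => K) (γ μ)))
  have hμ := congrArg (· P) (MvPolynomial.comp_aeval (fun p => E p.1 p.2) (aeval μ))
  simp only [AlgHom.comp_apply, Pi.evalAlgHom_apply, coe_aeval_eq_eval] at hγ hμ
  rw [hγ, hμ]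
  simp only [hE]

theorem exists_isDiag_mul_mul_inv_eq_sliceSL2 [IsAlgClosed K] (g : SL(2, K))
    (hb : g 0 1 ≠ 0) (hd : g 1 1 ≠ 0) :
    ∃ s t, IsDiag K s ∧ IsDiag K t ∧ s * g * t⁻¹ = sliceSL2 (g 0 0 * g 1 1) := by
  obtain ⟨ν, hν⟩ := IsAlgClosed.exists_pow_nat_eq (g 0 1 * g 1 1) two_pos
  have hν0 : ν ≠ 0 := by rintro rfl; exact mul_ne_zero hb hd (by simpa using hν.symm)
  set u := Units.mk0 (ν / g 0 1) (div_ne_zero hν0 hb)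
  set v := Units.mk0 ν hν0
  refine ⟨diagSL2 u, diagSL2 v⁻¹, isDiag_iff_exists_eq_diagSL2.2 ⟨_, rfl⟩,
    isDiag_iff_exists_eq_diagSL2.2 ⟨_, rfl⟩, ?_⟩
  have hdet := SL2_det_fin_two g
  rw [← map_inv, inv_inv]
  ext i j
  rw [coe_diagSL2_mul_mul_diagSL2, coe_sliceSL2]
  fin_cases i <;> fin_cases j <;> simp only [u, v] <;> simp
  · field_simp
    linear_combination g 0 0 * hν
  · field_simp
  · field_simp
    linear_combination -hdet
  · field_simp
    linear_combination -hν

theorem eq_eval_of_mem_invSL2 [IsAlgClosed K] {φ : SL(2, K) → K} (hφ : φ ∈ invSL2 K)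
    {q : K[X]} (hq : ∀ α, φ (sliceSL2 α) = q.eval α) (g : SL(2, K)) (hb : g 0 1 ≠ 0)
    (hd : g 1 1 ≠ 0) : φ g = q.eval (g 0 0 * g 1 1) := by
  obtain ⟨s, t, hs, ht, hst⟩ := exists_isDiag_mul_mul_inv_eq_sliceSL2 g hb hd
  rw [← hq, ← hst, hφ s t hs ht]

theorem exists_eq_eval_of_mem_regularSL2_inf_invSL2 [IsAlgClosed K] {φ : SL(2, K) → K}
    (hφ : φ ∈ regularSL2 K ⊓ invSL2 K) : ∃ q : K[X], ∀ g, φ g = q.eval (g 0 0 * g 1 1) := by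
  obtain ⟨hreg, hinv⟩ := hφ
  obtain ⟨q, hq⟩ := exists_eval_eq_of_mem_regularSL2 hreg sliceSL2 !![X, 1; X - 1, 1] <| by
    intro μ i j
    fin_cases i <;> fin_cases j <;> simp
  refine ⟨q, fun g => ?_⟩
  obtain ⟨p, hp⟩ := exists_eval_eq_of_mem_regularSL2 hreg (fun μ => g * upperUnipotentSL2 μ)
      !![C (g 0 0), C (g 0 0) * X + C (g 0 1); C (g 1 0), C (g 1 0) * X + C (g 1 1)] <| by
    intro μ i j
    simp only [coe_mul_upperUnipotentSL2]
    fin_cases i <;> fin_cases j <;> simp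
  have hpq : p = q.comp (C (g 0 0) * (C (g 1 0) * X + C (g 1 1))) := by
    refine eq_of_eval_eq_of_eval_ne_zero (mul_ne_zero (C_mul_X_add_C_ne_zero
      (SL2_row_ne_zero g 0)) (C_mul_X_add_C_ne_zero (SL2_row_ne_zero g 1))) fun μ hμ => ?_
    rw [eval_mul, mul_ne_zero_iff] at hμ
    simp only [eval_add, eval_mul, eval_C, eval_X] at hμ
    rw [← hp, eval_comp, eq_eval_of_mem_invSL2 hinv hq]
    all_goals simp only [coe_mul_upperUnipotentSL2]; simp [hμ.1, hμ.2]
  calc φ g = φ (g * upperUnipotentSL2 0) := by rw [upperUnipotentSL2_zero, mul_one]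
    _ = p.eval 0 := hp 0
    _ = q.eval (g 0 0 * g 1 1) := by simp [hpq]

end

/-- the algebra of regular functions on `SL₂` invariant under the
two-sided action `(s,t)·X = sXt⁻¹` of the diagonal torus `T₂` is a polynomial algebra in
one variable, generated by the product `X₁₁X₂₂` of the diagonal entries; so
`T₂∖SL₂/T₂ = 𝔸¹`. -/
theorem stmt18 :
    let f : Matrix.SpecialLinearGroup (Fin 2) k → k := fun X => X.1 0 0 * X.1 1 1
    (regularSL2 k ⊓ invSL2 k : Subalgebra k (Matrix.SpecialLinearGroup (Fin 2) k → k))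
      = Algebra.adjoin k {f} ∧
    Transcendental k f := by
  intro f
  refine ⟨le_antisymm (fun φ hφ => ?_) (Algebra.adjoin_le ?_), ?_⟩
  · obtain ⟨q, hq⟩ := exists_eq_eval_of_mem_regularSL2_inf_invSL2 hφ
    rw [Algebra.adjoin_singleton_eq_range_aeval]
    exact ⟨q, funext fun g => by simp [hq g, f]⟩
  · rintro _ rfl
    exact ⟨mul_diag_mem_regularSL2, mul_diag_mem_invSL2⟩
  · exact transcendental_of_surjective fun α => ⟨sliceSL2 α, by simp [f]⟩
end
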